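/- arXiv:1004.3964 — 8 statements merged into one kernel-verified Lean document; each statement's English description precedes it below -/
import Mathlib

section
/- There is a bijection between increasing 1-2 trees on the vertex set {0,1,...,n} and simsun permutations in S_n, under which a tree with k+1 leaves corresponds to a simsun permutation with exactly k descents. -/
/-!
Both families grow one element at a time. Deleting the vertex `n + 1` from an increasing 1-2
tree leaves a tree on `{0, …, n}` together with the parent of `n + 1`, which can be any vertex
with at most one child; the number of leaves stays the same if that parent was a leaf and grows
by one otherwise. Deleting the largest value from a simsun permutation leaves a simsun
permutation `τ` together with the slot it occupied, which can be any slot that does not split a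
descent of `τ`; the number of descents stays the same if the slot is the last one or follows a
descent, and grows by one otherwise. A tree with `L` leaves and a simsun permutation with `L - 1`
descents thus both have `L` choices of the first kind and `n + 2 - 2L` of the second, so by
induction on `n` the bijections between the fibres of the two statistics extend from `n` to
`n + 1`.
-/

/-- A permutation `σ ∈ S_n` is *simsun* if for every `k`, the subword of `σ`
restricted to the `k` smallest values has no double descent, i.e. no three
consecutive (in that subword) decreasing elements. -/
def Simsun {n : ℕ} (σ : Equiv.Perm (Fin n)) : Prop :=
  ∀ k : ℕ, ¬ ∃ i j l : Fin n, i < j ∧ j < l ∧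
    (σ i).val < k ∧ (σ j).val < k ∧ (σ l).val < k ∧
    σ l < σ j ∧ σ j < σ i ∧
    (∀ m : Fin n, i < m → m < j → k ≤ (σ m).val) ∧
    (∀ m : Fin n, j < m → m < l → k ≤ (σ m).val)

def DoubleSimsun {n : ℕ} (σ : Equiv.Perm (Fin n)) : Prop :=
  Simsun σ ∧ Simsun σ⁻¹

def Avoids123 {n : ℕ} (σ : Equiv.Perm (Fin n)) : Prop :=
  ¬ ∃ i j k : Fin n, i < j ∧ j < k ∧ σ i < σ j ∧ σ j < σ k

def Avoids132 {n : ℕ} (σ : Equiv.Perm (Fin n)) : Prop :=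
  ¬ ∃ i j k : Fin n, i < j ∧ j < k ∧ σ i < σ k ∧ σ k < σ j

def Avoids213 {n : ℕ} (σ : Equiv.Perm (Fin n)) : Prop :=
  ¬ ∃ i j k : Fin n, i < j ∧ j < k ∧ σ j < σ i ∧ σ i < σ k

def Avoids231 {n : ℕ} (σ : Equiv.Perm (Fin n)) : Prop :=
  ¬ ∃ i j k : Fin n, i < j ∧ j < k ∧ σ k < σ i ∧ σ i < σ j

def Avoids312 {n : ℕ} (σ : Equiv.Perm (Fin n)) : Prop :=
  ¬ ∃ i j k : Fin n, i < j ∧ j < k ∧ σ j < σ k ∧ σ k < σ i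

def Avoids321 {n : ℕ} (σ : Equiv.Perm (Fin n)) : Prop :=
  ¬ ∃ i j k : Fin n, i < j ∧ j < k ∧ σ k < σ j ∧ σ j < σ i

/-- An occurrence of the pattern 4132 at positions `i1 < i2 < i3 < i4`. -/
def Pattern4132At {n : ℕ} (σ : Equiv.Perm (Fin n)) (i1 i2 i3 i4 : Fin n) : Prop :=
  i1 < i2 ∧ i2 < i3 ∧ i3 < i4 ∧ σ i2 < σ i4 ∧ σ i4 < σ i3 ∧ σ i3 < σ i1

/-- An occurrence of the pattern 51342 at positions `j1 < j2 < j3 < j4 < j5`. -/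
def Pattern51342At {n : ℕ} (σ : Equiv.Perm (Fin n)) (j1 j2 j3 j4 j5 : Fin n) : Prop :=
  j1 < j2 ∧ j2 < j3 ∧ j3 < j4 ∧ j4 < j5 ∧
  σ j2 < σ j5 ∧ σ j5 < σ j3 ∧ σ j3 < σ j4 ∧ σ j4 < σ j1

/-- `σ` has no occurrence of the pattern 4132. -/
def No4132 {n : ℕ} (σ : Equiv.Perm (Fin n)) : Prop :=
  ¬ ∃ i1 i2 i3 i4 : Fin n, Pattern4132At σ i1 i2 i3 i4

/-- Every occurrence of the pattern 4132 in `σ` is contained in an occurrence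
of the pattern 51342 (its four indices are among the five indices). -/
def Every4132In51342 {n : ℕ} (σ : Equiv.Perm (Fin n)) : Prop :=
  ∀ i1 i2 i3 i4 : Fin n, Pattern4132At σ i1 i2 i3 i4 →
    ∃ j1 j2 j3 j4 j5 : Fin n, Pattern51342At σ j1 j2 j3 j4 j5 ∧
      ({i1, i2, i3, i4} : Set (Fin n)) ⊆ ({j1, j2, j3, j4, j5} : Set (Fin n))

def Contains35142 {n : ℕ} (σ : Equiv.Perm (Fin n)) : Prop :=
  ∃ i1 i2 i3 i4 i5 : Fin n, i1 < i2 ∧ i2 < i3 ∧ i3 < i4 ∧ i4 < i5 ∧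
    σ i3 < σ i5 ∧ σ i5 < σ i1 ∧ σ i1 < σ i4 ∧ σ i4 < σ i2

def Contains42513 {n : ℕ} (σ : Equiv.Perm (Fin n)) : Prop :=
  ∃ i1 i2 i3 i4 i5 : Fin n, i1 < i2 ∧ i2 < i3 ∧ i3 < i4 ∧ i4 < i5 ∧
    σ i4 < σ i2 ∧ σ i2 < σ i5 ∧ σ i5 < σ i1 ∧ σ i1 < σ i3

/-- A Motzkin path encoded as a list of steps `1` (up), `-1` (down), `0` (level):
all prefix sums are nonnegative and the total sum is zero. -/
def MotzkinPath (p : List ℤ) : Prop :=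
  (∀ s ∈ p, s = 1 ∨ s = -1 ∨ s = 0) ∧ (∀ t : List ℤ, t <+: p → 0 ≤ t.sum) ∧ p.sum = 0

/-- The path has no two consecutive up steps. -/
def UUFree (p : List ℤ) : Prop := ¬ ([1, 1] : List ℤ) <:+: p

-- The number of descents of a permutation
open scoped Classical in
noncomputable def numDescents {n : ℕ} (σ : Equiv.Perm (Fin n)) : ℕ :=
  (Finset.univ.filter fun i : Fin n =>
    ∃ h : i.val + 1 < n, σ ⟨i.val + 1, h⟩ < σ i).card

/-- `τ_1 > τ_2 < τ_3 > τ_4 < ⋯` (indices are 0-based here). -/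
def Alternating {m : ℕ} (τ : Equiv.Perm (Fin m)) : Prop :=
  ∀ i : Fin m, ∀ h : i.val + 1 < m,
    if i.val % 2 = 0 then τ ⟨i.val + 1, h⟩ < τ i else τ i < τ ⟨i.val + 1, h⟩

/-- An increasing 1-2 tree on `{0,1,…,n}`: each vertex `i+1` (for `i : Fin n`)
has a parent strictly smaller than it (so the tree is rooted at `0` with all
root-paths increasing), and every vertex has at most two children.  The order
of subtrees is irrelevant. -/
structure Inc12Tree (n : ℕ) where
  parent : Fin n → Fin (n + 1)
  inc : ∀ i : Fin n, (parent i).val < i.val + 1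
  deg : ∀ v : Fin (n + 1), (Finset.univ.filter fun i : Fin n => parent i = v).card ≤ 2

open scoped Classical in
noncomputable def Inc12Tree.numLeaves {n : ℕ} (T : Inc12Tree n) : ℕ :=
  (Finset.univ.filter fun v : Fin (n + 1) => ∀ i : Fin n, T.parent i ≠ v).card

open Finset

theorem Equiv.exists_comp_eq_of_card_fiber_eq {α β γ : Type*} [Fintype α] [Fintype β]
    [DecidableEq γ] {f : α → γ} {g : β → γ}
    (h : ∀ c, Fintype.card {a // f a = c} = Fintype.card {b // g b = c}) :
    ∃ e : α ≃ β, ∀ a, g (e a) = f a :=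
  ⟨Equiv.ofFiberEquiv fun c => Fintype.equivOfCardEq (h c), Equiv.ofFiberEquiv_map _⟩

theorem Equiv.exists_sigma_comp_eq_of_card_fiber_eq {B B' γ : Type*} {S : B → Type*}
    {S' : B' → Type*} [∀ b, Fintype (S b)] [∀ b, Fintype (S' b)] [DecidableEq γ] (e : B ≃ B')
    (f : (Σ b, S b) → γ) (f' : (Σ b, S' b) → γ)
    (h : ∀ b c, Fintype.card {s // f ⟨b, s⟩ = c} = Fintype.card {s // f' ⟨e b, s⟩ = c}) :
    ∃ E : (Σ b, S b) ≃ Σ b, S' b, ∀ x, f' (E x) = f x := by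
  choose F hF using fun b => Equiv.exists_comp_eq_of_card_fiber_eq (h b)
  exact ⟨Equiv.sigmaCongr e F, fun ⟨b, s⟩ => hF b s⟩

theorem Fintype.card_add_ite_eq {S : Type*} [Fintype S] (P : S → Prop) [DecidablePred P]
    (L c : ℕ) :
    Fintype.card {s // L + (if P s then 0 else 1) = c} =
      if c = L then Fintype.card {s // P s}
      else if c = L + 1 then Fintype.card {s // ¬ P s} else 0 := by
  split_ifs with hL hL'
  · exact Fintype.card_congr <| Equiv.subtypeEquivRight fun s => by split_ifs <;> simp_all
  · exact Fintype.card_congr <| Equiv.subtypeEquivRight fun s => by split_ifs <;> simp_all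
  · exact Fintype.card_eq_zero_iff.2 ⟨fun ⟨s, hs⟩ => by split_ifs at hs <;> omega⟩

theorem Fintype.card_subtype_subtype {α : Type*} [Fintype α] (p q : α → Prop) [DecidablePred p]
    [DecidablePred q] : Fintype.card {a : {a // p a} // q a} = #{a | p a ∧ q a} := by
  rw [Fintype.card_congr (Equiv.subtypeSubtypeEquivSubtypeInter p q), Fintype.card_subtype]

theorem Fin.card_filter_eq_castSucc {n m : ℕ} (g : Fin (n + 1) → Fin (m + 1))
    (f : Fin n → Fin m) (hf : ∀ i, g i.castSucc = (f i).castSucc) (w : Fin m) :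
    #{i | g i = w.castSucc} = #{i | f i = w} + if g (Fin.last n) = w.castSucc then 1 else 0 := by
  simp only [card_filter, Fin.sum_univ_castSucc, hf, Fin.castSucc_inj]

namespace Inc12Tree

variable {n : ℕ}

@[ext] theorem ext {T T' : Inc12Tree n} (h : T.parent = T'.parent) : T = T' := by
  cases T; cases T'; cases h; rfl

def childCount (T : Inc12Tree n) (v : Fin (n + 1)) : ℕ := #{i | T.parent i = v}

theorem childCount_le_two (T : Inc12Tree n) (v : Fin (n + 1)) : T.childCount v ≤ 2 := T.deg v

theorem numLeaves_eq (T : Inc12Tree n) : T.numLeaves = #{v | T.childCount v = 0} := by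
  simp [numLeaves, childCount, filter_eq_empty_iff]

theorem sum_childCount (T : Inc12Tree n) : ∑ v, T.childCount v = n := by
  simpa [childCount] using
    (card_eq_sum_card_fiberwise (f := T.parent) (s := univ) (t := univ) (by simp)).symm

theorem card_childCount_eq_one_add_two_mul_numLeaves (T : Inc12Tree n) :
    #{v | T.childCount v = 1} + 2 * T.numLeaves = n + 2 := by
  have hpt : ∀ v, 2 - T.childCount v =
      (if T.childCount v = 1 then 1 else 0) + 2 * (if T.childCount v = 0 then 1 else 0) := by
    intro v
    have := T.childCount_le_two v
    split_ifs <;> omega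
  have htot : ∑ v, (2 - T.childCount v) + ∑ v, T.childCount v = 2 * (n + 1) := by
    rw [← sum_add_distrib, sum_congr rfl fun v _ => Nat.sub_add_cancel (T.childCount_le_two v)]
    simp [mul_comm]
  simp only [hpt, sum_add_distrib, ← mul_sum, sum_childCount, ← card_filter] at htot
  rw [numLeaves_eq]
  omega

theorem parent_ne_last (T : Inc12Tree n) (i : Fin n) : T.parent i ≠ Fin.last n := by
  have := T.inc i
  exact Fin.ne_of_lt (Fin.lt_def.2 (by simp; omega))

def addLeaf (T : Inc12Tree n) (v : Fin (n + 1)) (hv : T.childCount v ≤ 1) :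
    Inc12Tree (n + 1) where
  parent := Fin.lastCases v.castSucc fun i => (T.parent i).castSucc
  inc := Fin.lastCases (by simpa [Nat.lt_succ_iff] using v.isLt) fun i => by simpa using T.inc i
  deg := Fin.lastCases
    (by
      rw [card_filter, Fin.sum_univ_castSucc]
      simp [(Fin.castSucc_lt_last _).ne])
    fun w => by
      rw [Fin.card_filter_eq_castSucc _ T.parent (by simp)]
      have := T.childCount_le_two w
      simp only [childCount, Fin.lastCases_last, Fin.castSucc_inj] at hv this ⊢
      split_ifs with h <;> simp_all

theorem parent_castSucc_lt (T : Inc12Tree (n + 1)) (i : Fin n) :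
    (T.parent i.castSucc).val < n + 1 := by
  have := T.inc i.castSucc
  simp only [Fin.val_castSucc] at this
  omega

def eraseLast (T : Inc12Tree (n + 1)) : Inc12Tree n where
  parent i := (T.parent i.castSucc).castLT (T.parent_castSucc_lt i)
  inc i := by simpa using T.inc i.castSucc
  deg v := by
    have h := Fin.card_filter_eq_castSucc T.parent
      (fun i => (T.parent i.castSucc).castLT (T.parent_castSucc_lt i))
      (fun i => (Fin.castSucc_castLT _ _).symm) v
    have := T.deg v.castSucc
    omega

def lastParent (T : Inc12Tree (n + 1)) : Fin (n + 1) :=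
  (T.parent (Fin.last n)).castLT (by simpa using T.inc (Fin.last n))

theorem childCount_castSucc (T : Inc12Tree (n + 1)) (w : Fin (n + 1)) :
    T.childCount w.castSucc =
      T.eraseLast.childCount w + if T.lastParent = w then 1 else 0 := by
  rw [childCount, Fin.card_filter_eq_castSucc T.parent T.eraseLast.parent
    (fun i => (Fin.castSucc_castLT _ _).symm)]
  simp [childCount, lastParent, Fin.ext_iff]

theorem childCount_lastParent_le (T : Inc12Tree (n + 1)) :
    T.eraseLast.childCount T.lastParent ≤ 1 := by
  have := T.childCount_le_two T.lastParent.castSucc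
  rw [childCount_castSucc, if_pos rfl] at this
  omega

theorem eraseLast_addLeaf (T : Inc12Tree n) (v : Fin (n + 1)) (hv : T.childCount v ≤ 1) :
    (T.addLeaf v hv).eraseLast = T := by
  ext1; funext i; simp [eraseLast, addLeaf]

theorem lastParent_addLeaf (T : Inc12Tree n) (v : Fin (n + 1)) (hv : T.childCount v ≤ 1) :
    (T.addLeaf v hv).lastParent = v := by
  simp [lastParent, addLeaf]

theorem addLeaf_eraseLast (T : Inc12Tree (n + 1)) :
    T.eraseLast.addLeaf T.lastParent T.childCount_lastParent_le = T := by
  ext1; funext i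
  induction i using Fin.lastCases <;> simp [addLeaf, eraseLast, lastParent]

def equivSigma : Inc12Tree (n + 1) ≃ Σ T : Inc12Tree n, {v // T.childCount v ≤ 1} where
  toFun T := ⟨T.eraseLast, T.lastParent, T.childCount_lastParent_le⟩
  invFun x := x.1.addLeaf x.2 x.2.2
  left_inv := addLeaf_eraseLast
  right_inv := fun ⟨T, v, hv⟩ =>
    Sigma.subtype_ext (eraseLast_addLeaf T v hv) (lastParent_addLeaf T v hv)

theorem numLeaves_addLeaf (T : Inc12Tree n) (v : Fin (n + 1)) (hv : T.childCount v ≤ 1) :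
    (T.addLeaf v hv).numLeaves = T.numLeaves + if T.childCount v = 0 then 0 else 1 := by
  have hcc : ∀ w, (T.addLeaf v hv).childCount w.castSucc =
      T.childCount w + if v = w then 1 else 0 := by
    intro w
    rw [childCount_castSucc, eraseLast_addLeaf, lastParent_addLeaf]
  have hlast : (T.addLeaf v hv).childCount (Fin.last (n + 1)) = 0 := by
    simp [childCount, parent_ne_last]
  have hpt : ∀ w, (if T.childCount w + (if v = w then 1 else 0) = 0 then 1 else 0) +
      (if v = w then if T.childCount v = 0 then 1 else 0 else 0) =
        if T.childCount w = 0 then 1 else 0 := by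
    intro w
    by_cases h : v = w <;> simp [h]
  have hsum := sum_congr rfl fun w (_ : w ∈ univ) => hpt w
  rw [sum_add_distrib, sum_ite_eq] at hsum
  rw [numLeaves_eq, numLeaves_eq, card_filter, card_filter, Fin.sum_univ_castSucc, ← hsum]
  simp only [hcc, hlast, mem_univ, if_true]
  split_ifs <;> omega

theorem card_fiber_numLeaves_addLeaf (T : Inc12Tree n) (c : ℕ) :
    Fintype.card {v : {v // T.childCount v ≤ 1} // (T.addLeaf v v.2).numLeaves = c} =
      if c = T.numLeaves then T.numLeaves
      else if c = T.numLeaves + 1 then n + 2 - 2 * T.numLeaves else 0 := by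
  rw [Fintype.card_congr (Equiv.subtypeEquivRight (q := fun v =>
      T.numLeaves + (if T.childCount v.1 = 0 then 0 else 1) = c)
      fun v => by rw [numLeaves_addLeaf]),
    Fintype.card_add_ite_eq,
    Fintype.card_subtype_subtype (fun v => T.childCount v ≤ 1) (fun v => T.childCount v = 0),
    Fintype.card_subtype_subtype (fun v => T.childCount v ≤ 1) (fun v => ¬ T.childCount v = 0)]
  have hleaf : #{v | T.childCount v ≤ 1 ∧ T.childCount v = 0} = T.numLeaves := by
    rw [numLeaves_eq]
    exact congrArg card (filter_congr fun v _ => by omega)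
  have hone : #{v | T.childCount v ≤ 1 ∧ ¬ T.childCount v = 0} = #{v | T.childCount v = 1} :=
    congrArg card (filter_congr fun v _ => by omega)
  have := T.card_childCount_eq_one_add_two_mul_numLeaves
  rw [hleaf, hone, show #{v | T.childCount v = 1} = n + 2 - 2 * T.numLeaves by omega]

end Inc12Tree

namespace Equiv.Perm

variable {m n : ℕ}

-- The value `n` is placed at position `p`, and `τ` fills the other positions in order.
def insertMax (p : Fin (n + 1)) (τ : Perm (Fin n)) : Perm (Fin (n + 1)) :=
  (finSuccEquiv' p).trans (τ.optionCongr.trans (finSuccEquiv' (Fin.last n)).symm)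

@[simp] theorem insertMax_self (p : Fin (n + 1)) (τ : Perm (Fin n)) :
    insertMax p τ p = Fin.last n := by
  simp [insertMax]

@[simp] theorem insertMax_succAbove (p : Fin (n + 1)) (τ : Perm (Fin n)) (j : Fin n) :
    insertMax p τ (p.succAbove j) = (τ j).castSucc := by
  simp [insertMax, Fin.succAbove_last]

theorem insertMax_bijective :
    Function.Bijective fun x : Fin (n + 1) × Perm (Fin n) => insertMax x.1 x.2 := by
  refine (Fintype.bijective_iff_injective_and_card _).2 ⟨?_, ?_⟩
  · rintro ⟨p, τ⟩ ⟨p', τ'⟩ h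
    have hp : p = p' := (insertMax p' τ').injective <| by
      simp only at h
      rw [← h, insertMax_self, h, insertMax_self]
    subst hp
    have hτ : τ = τ' := Equiv.ext fun j => Fin.castSucc_injective n <| by
      rw [← insertMax_succAbove p, ← insertMax_succAbove p]
      exact congrArg (· (p.succAbove j)) h
    rw [hτ]
  · simp [Fintype.card_perm, Nat.factorial_succ]

theorem insertMax_apply_of_lt (p : Fin (n + 1)) (τ : Perm (Fin n)) {i : ℕ} (h : i < p) :
    insertMax p τ ⟨i, by omega⟩ = (τ ⟨i, by omega⟩).castSucc := by
  rw [← insertMax_succAbove p τ, Fin.succAbove_of_castSucc_lt _ _ (by simpa [Fin.lt_def])]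
  rfl

theorem insertMax_apply_of_le (p : Fin (n + 1)) (τ : Perm (Fin n)) {i : ℕ} (h : p ≤ i)
    (hi : i < n) : insertMax p τ ⟨i + 1, by omega⟩ = (τ ⟨i, hi⟩).castSucc := by
  rw [← insertMax_succAbove p τ, Fin.succAbove_of_le_castSucc _ _ (by simpa [Fin.le_def])]
  rfl

def DescentAt (σ : Perm (Fin m)) (i : ℕ) : Prop :=
  ∃ h : i + 1 < m, σ ⟨i + 1, h⟩ < σ ⟨i, by omega⟩

instance (σ : Perm (Fin m)) (i : ℕ) : Decidable (σ.DescentAt i) := by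
  unfold DescentAt; infer_instance

theorem DescentAt.lt {σ : Perm (Fin m)} {i : ℕ} (h : σ.DescentAt i) : i + 1 < m := h.1

theorem descentAt_iff {σ : Perm (Fin m)} {i j : Fin m} (h : j.val = i.val + 1) :
    σ.DescentAt i ↔ σ j < σ i := by
  rw [show j = ⟨i.val + 1, by omega⟩ from Fin.ext h]
  exact ⟨fun ⟨_, h⟩ => h, fun h' => ⟨by omega, h'⟩⟩

theorem numDescents_eq_sum (σ : Perm (Fin m)) :
    numDescents σ = ∑ i ∈ range m, if σ.DescentAt i then 1 else 0 := by
  rw [← Fin.sum_univ_eq_sum_range (fun i => if σ.DescentAt i then 1 else 0), numDescents,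
    card_filter]
  congr 1

section insertMax

variable (p : Fin (n + 1)) (τ : Perm (Fin n))

theorem descentAt_insertMax_of_lt {i : ℕ} (h : i + 1 < p) :
    (insertMax p τ).DescentAt i ↔ τ.DescentAt i := by
  have hn : i + 1 < n := by omega
  refine ⟨fun ⟨_, hd⟩ => ⟨hn, ?_⟩, fun ⟨_, hd⟩ => ⟨by omega, ?_⟩⟩
  · rwa [insertMax_apply_of_lt p τ h, insertMax_apply_of_lt p τ (by omega),
      Fin.castSucc_lt_castSucc_iff] at hd
  · rwa [insertMax_apply_of_lt p τ h, insertMax_apply_of_lt p τ (by omega),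
      Fin.castSucc_lt_castSucc_iff]

theorem not_descentAt_insertMax_of_succ_eq {i : ℕ} (h : i + 1 = p) :
    ¬ (insertMax p τ).DescentAt i := by
  rintro ⟨hi, hd⟩
  rw [show (⟨i + 1, hi⟩ : Fin (n + 1)) = p from Fin.ext h, insertMax_self] at hd
  exact (Fin.le_last _).not_gt hd

theorem descentAt_insertMax_self_iff : (insertMax p τ).DescentAt p ↔ p.val < n := by
  refine ⟨fun h => by have := h.lt; omega, fun h => ⟨by omega, ?_⟩⟩
  rw [insertMax_apply_of_le p τ le_rfl h]
  simp

theorem descentAt_insertMax_succ_iff {i : ℕ} (h : p ≤ i) :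
    (insertMax p τ).DescentAt (i + 1) ↔ τ.DescentAt i := by
  refine ⟨fun ⟨hi, hd⟩ => ⟨by omega, ?_⟩, fun ⟨hi, hd⟩ => ⟨by omega, ?_⟩⟩
  · rwa [insertMax_apply_of_le p τ (by omega) (by omega), insertMax_apply_of_le p τ h,
      Fin.castSucc_lt_castSucc_iff] at hd
  · rwa [insertMax_apply_of_le p τ (by omega) hi, insertMax_apply_of_le p τ h,
      Fin.castSucc_lt_castSucc_iff]

def IsNeutralSlot : Prop := p.val = n ∨ (0 < p.val ∧ τ.DescentAt (p.val - 1))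

instance : Decidable (IsNeutralSlot p τ) := by
  unfold IsNeutralSlot; infer_instance

theorem numDescents_insertMax :
    numDescents (insertMax p τ) = numDescents τ + if IsNeutralSlot p τ then 0 else 1 := by
  -- Split both descent sums at `p`: the maximum creates a descent at `p` (if `p < n`) and
  -- destroys the one at `p - 1`, while the remaining descents are shifted.
  obtain ⟨r, hr⟩ : ∃ r, n = p + r := ⟨n - p, by omega⟩
  have hlow : ∑ i ∈ range p, (if (insertMax p τ).DescentAt i then 1 else 0) +
      (if 0 < p.val ∧ τ.DescentAt (p.val - 1) then 1 else 0) =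
        ∑ i ∈ range p, if τ.DescentAt i then 1 else 0 := by
    rcases (p.val).eq_zero_or_pos with hp0 | hpos
    · simp [hp0]
    · obtain ⟨s, hs⟩ : ∃ s, p.val = s + 1 := ⟨p.val - 1, by omega⟩
      have hlt : ∀ i ∈ range s, i + 1 < p := fun i hi => by simp at hi; omega
      rw [hs, sum_range_succ, sum_range_succ,
        if_neg (not_descentAt_insertMax_of_succ_eq p τ hs.symm), Nat.add_sub_cancel,
        sum_congr rfl fun i hi => if_congr (descentAt_insertMax_of_lt p τ (hlt i hi)) rfl rfl]
      simp
  have hhigh : ∑ i ∈ range (r + 1), (if (insertMax p τ).DescentAt (p + i) then 1 else 0) =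
      ∑ i ∈ range r, (if τ.DescentAt (p + i) then 1 else 0) + if p.val < n then 1 else 0 := by
    rw [sum_range_succ', sum_congr rfl fun i _ =>
      if_congr (by rw [← Nat.add_assoc, descentAt_insertMax_succ_iff p τ (Nat.le_add_right p i)])
        rfl rfl]
    simp only [add_zero, descentAt_insertMax_self_iff]
  have hσ := sum_range_add (fun i => if (insertMax p τ).DescentAt i then 1 else 0) p (r + 1)
  have hτ := sum_range_add (fun i => if τ.DescentAt i then 1 else 0) p r
  rw [show p + (r + 1) = n + 1 by omega, ← numDescents_eq_sum] at hσ
  rw [← hr, ← numDescents_eq_sum] at hτ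
  have key : numDescents (insertMax p τ) +
      (if 0 < p.val ∧ τ.DescentAt (p.val - 1) then 1 else 0) =
        numDescents τ + if p.val < n then 1 else 0 := by
    omega
  by_cases hpn : p.val = n
  · have hA : ¬ (0 < p.val ∧ τ.DescentAt (p.val - 1)) := fun h => by have := h.2.lt; omega
    rw [if_neg hA, if_neg (by omega)] at key
    simp only [IsNeutralSlot, hpn, true_or, if_true]
    omega
  · rw [if_pos (show p.val < n by omega)] at key
    simp only [IsNeutralSlot, hpn, false_or]
    split_ifs at key ⊢ <;> omega

end insertMax

-- `Simsun σ` unfolds to `∀ k, ¬ σ.HasDoubleDescentBelow k`.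
def HasDoubleDescentBelow (σ : Perm (Fin m)) (k : ℕ) : Prop :=
  ∃ i j l : Fin m, i < j ∧ j < l ∧
    (σ i).val < k ∧ (σ j).val < k ∧ (σ l).val < k ∧
    σ l < σ j ∧ σ j < σ i ∧
    (∀ x : Fin m, i < x → x < j → k ≤ (σ x).val) ∧
    (∀ x : Fin m, j < x → x < l → k ≤ (σ x).val)

def HasDoubleDescent (σ : Perm (Fin m)) : Prop := ∃ i, σ.DescentAt i ∧ σ.DescentAt (i + 1)

theorem val_eq_succ_of_forall_between {σ : Perm (Fin m)} {k : ℕ} (hk : m ≤ k) {i j : Fin m}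
    (hij : i < j) (h : ∀ x, i < x → x < j → k ≤ (σ x).val) : j.val = i.val + 1 := by
  rw [Fin.lt_def] at hij
  by_contra hne
  have := h ⟨i + 1, by omega⟩ (Fin.lt_def.2 (by simp)) (Fin.lt_def.2 (by simp; omega))
  have := (σ ⟨i + 1, by omega⟩).isLt
  omega

theorem hasDoubleDescentBelow_iff_of_le {σ : Perm (Fin m)} {k : ℕ} (hk : m ≤ k) :
    σ.HasDoubleDescentBelow k ↔ σ.HasDoubleDescent := by
  constructor
  · rintro ⟨i, j, l, hij, hjl, -, -, -, hlj, hji, gij, gjl⟩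
    have hj := val_eq_succ_of_forall_between hk hij gij
    have hl := val_eq_succ_of_forall_between hk hjl gjl
    exact ⟨i, (descentAt_iff hj).2 hji, hj ▸ (descentAt_iff hl).2 hlj⟩
  · rintro ⟨i, h₁, h₂⟩
    have := h₂.lt
    have hgap : ∀ a : ℕ, ∀ x : Fin m, a < x.val → x.val < a + 1 → False := by omega
    refine ⟨⟨i, by omega⟩, ⟨i + 1, by omega⟩, ⟨i + 2, by omega⟩, Fin.lt_def.2 (by simp),
      Fin.lt_def.2 (by simp), by omega, by omega, by omega, (descentAt_iff rfl).1 h₂,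
      (descentAt_iff rfl).1 h₁, fun x h h' => (hgap i x h h').elim,
      fun x h h' => (hgap (i + 1) x h h').elim⟩

theorem simsun_iff_forall_le {σ : Perm (Fin m)} :
    Simsun σ ↔ ∀ k ≤ m, ¬ σ.HasDoubleDescentBelow k := by
  refine ⟨fun h k _ => h k, fun h k => ?_⟩
  change ¬ σ.HasDoubleDescentBelow k
  rcases le_or_gt k m with hk | hk
  · exact h k hk
  · rw [hasDoubleDescentBelow_iff_of_le hk.le, ← hasDoubleDescentBelow_iff_of_le le_rfl]
    exact h m le_rfl

theorem not_hasDoubleDescent_of_simsun {σ : Perm (Fin m)} (h : Simsun σ) :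
    ¬ σ.HasDoubleDescent :=
  fun hd => h m ((hasDoubleDescentBelow_iff_of_le le_rfl).2 hd)

section insertMax

variable (p : Fin (n + 1)) (τ : Perm (Fin n))

theorem hasDoubleDescentBelow_insertMax_iff {k : ℕ} (hk : k ≤ n) :
    (insertMax p τ).HasDoubleDescentBelow k ↔ τ.HasDoubleDescentBelow k := by
  constructor
  · rintro ⟨i, j, l, hij, hjl, hi, hj, hl, hlj, hji, gij, gjl⟩
    have hne : ∀ x, (insertMax p τ x).val < k → x ≠ p := by
      rintro x hx rfl
      simp at hx
      omega
    obtain ⟨i, rfl⟩ := Fin.exists_succAbove_eq (hne _ hi)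
    obtain ⟨j, rfl⟩ := Fin.exists_succAbove_eq (hne _ hj)
    obtain ⟨l, rfl⟩ := Fin.exists_succAbove_eq (hne _ hl)
    simp only [insertMax_succAbove, Fin.succAbove_lt_succAbove_iff, Fin.castSucc_lt_castSucc_iff,
      Fin.val_castSucc] at hij hjl hi hj hl hlj hji
    refine ⟨i, j, l, hij, hjl, hi, hj, hl, hlj, hji, fun x h h' => ?_, fun x h h' => ?_⟩
    · simpa using gij (p.succAbove x) (by simpa) (by simpa)
    · simpa using gjl (p.succAbove x) (by simpa) (by simpa)
  · rintro ⟨i, j, l, hij, hjl, hi, hj, hl, hlj, hji, gij, gjl⟩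
    have hgap : ∀ a b, (∀ x, a < x → x < b → k ≤ (τ x).val) →
        ∀ y, p.succAbove a < y → y < p.succAbove b → k ≤ (insertMax p τ y).val := by
      intro a b g y h h'
      rcases eq_or_ne y p with rfl | hy
      · simp
        omega
      · obtain ⟨x, rfl⟩ := Fin.exists_succAbove_eq hy
        simpa using g x (by simpa using h) (by simpa using h')
    exact ⟨p.succAbove i, p.succAbove j, p.succAbove l, by simpa, by simpa, by simpa, by simpa,
      by simpa, by simpa, by simpa, hgap i j gij, hgap j l gjl⟩

theorem hasDoubleDescent_insertMax_iff (h : ¬ τ.HasDoubleDescent) :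
    (insertMax p τ).HasDoubleDescent ↔ τ.DescentAt p := by
  constructor
  · rintro ⟨i, h₁, h₂⟩
    rcases lt_trichotomy i p with hi | rfl | hi
    · exfalso
      rcases (show i + 1 = p ∨ i + 2 = p ∨ i + 2 < p by omega) with e | e | e
      · exact not_descentAt_insertMax_of_succ_eq p τ e h₁
      · exact not_descentAt_insertMax_of_succ_eq p τ e h₂
      · exact h ⟨i, (descentAt_insertMax_of_lt p τ (by omega)).1 h₁,
          (descentAt_insertMax_of_lt p τ e).1 h₂⟩
    · exact (descentAt_insertMax_succ_iff p τ le_rfl).1 h₂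
    · obtain ⟨j, rfl⟩ : ∃ j, i = j + 1 := ⟨i - 1, by omega⟩
      exact (h ⟨j, (descentAt_insertMax_succ_iff p τ (by omega)).1 h₁,
        (descentAt_insertMax_succ_iff p τ (by omega)).1 h₂⟩).elim
  · intro hd
    exact ⟨p, (descentAt_insertMax_self_iff p τ).2 (by have := hd.lt; omega),
      (descentAt_insertMax_succ_iff p τ le_rfl).2 hd⟩

theorem simsun_insertMax_iff : Simsun (insertMax p τ) ↔ Simsun τ ∧ ¬ τ.DescentAt p := by
  constructor
  · intro hσ
    have hτ : Simsun τ := simsun_iff_forall_le.2 fun k hk => by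
      rw [← hasDoubleDescentBelow_insertMax_iff p τ hk]
      exact hσ k
    exact ⟨hτ, fun hd => not_hasDoubleDescent_of_simsun hσ
      ((hasDoubleDescent_insertMax_iff p τ (not_hasDoubleDescent_of_simsun hτ)).2 hd)⟩
  · rintro ⟨hτ, hp⟩
    refine simsun_iff_forall_le.2 fun k hk => ?_
    rcases hk.lt_or_eq with hk | rfl
    · rw [hasDoubleDescentBelow_insertMax_iff p τ (by omega)]
      exact hτ k
    · rw [hasDoubleDescentBelow_iff_of_le le_rfl,
        hasDoubleDescent_insertMax_iff p τ (not_hasDoubleDescent_of_simsun hτ)]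
      exact hp

end insertMax

noncomputable def insertMaxSimsunEquiv :
    (Σ τ : {τ : Perm (Fin n) // Simsun τ}, {p : Fin (n + 1) // ¬ τ.1.DescentAt p}) ≃
      {σ : Perm (Fin (n + 1)) // Simsun σ} :=
  Equiv.ofBijective
    (fun x => ⟨insertMax x.2 x.1, (simsun_insertMax_iff _ _).2 ⟨x.1.2, x.2.2⟩⟩) <| by
    constructor
    · rintro ⟨⟨τ, hτ⟩, p, hp⟩ ⟨⟨τ', hτ'⟩, p', hp'⟩ h
      obtain ⟨rfl, rfl⟩ := Prod.ext_iff.1 <|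
        insertMax_bijective.1 (a₁ := (p, τ)) (a₂ := (p', τ')) (congrArg Subtype.val h)
      rfl
    · rintro ⟨σ, hσ⟩
      obtain ⟨⟨p, τ⟩, rfl⟩ := insertMax_bijective.2 σ
      obtain ⟨hτ, hp⟩ := (simsun_insertMax_iff p τ).1 hσ
      exact ⟨⟨⟨τ, hτ⟩, p, hp⟩, rfl⟩

section slots

variable (τ : Perm (Fin n))

theorem card_descentAt_slots : #{p : Fin (n + 1) | τ.DescentAt p} = numDescents τ := by
  rw [card_filter, Fin.sum_univ_eq_sum_range (fun i => if τ.DescentAt i then 1 else 0),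
    sum_range_succ, numDescents_eq_sum, if_neg fun h => by have := h.lt; omega, add_zero]

theorem card_neutral_slots (h : ¬ τ.HasDoubleDescent) :
    #{p : Fin (n + 1) | ¬ τ.DescentAt p ∧ IsNeutralSlot p τ} = numDescents τ + 1 := by
  have hpt : ∀ p : Fin (n + 1),
      (if ¬ τ.DescentAt p ∧ IsNeutralSlot p τ then 1 else 0) =
        (if p.val = n then 1 else 0) + if 0 < p.val ∧ τ.DescentAt (p.val - 1) then 1 else 0 := by
    intro p
    by_cases hpn : p.val = n
    · have h₁ : ¬ τ.DescentAt p := fun h => by have := h.lt; omega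
      have h₂ : ¬ τ.DescentAt (p - 1) := fun h => by have := h.lt; omega
      rw [if_pos ⟨h₁, Or.inl hpn⟩, if_pos hpn, if_neg fun h => h₂ h.2]
    · by_cases hd : 0 < p.val ∧ τ.DescentAt (p.val - 1)
      · have : ¬ τ.DescentAt p := fun h' => h ⟨p - 1, hd.2, by rwa [Nat.sub_add_cancel hd.1]⟩
        rw [if_pos ⟨this, Or.inr hd⟩, if_neg hpn, if_pos hd]
      · rw [if_neg fun h' => hd (h'.2.resolve_left hpn), if_neg hpn, if_neg hd]
  rw [card_filter, sum_congr rfl fun p _ => hpt p, sum_add_distrib,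
    Fin.sum_univ_eq_sum_range (fun i => if i = n then 1 else 0),
    Fin.sum_univ_eq_sum_range (fun i => if 0 < i ∧ τ.DescentAt (i - 1) then 1 else 0),
    sum_ite_eq', sum_range_succ', numDescents_eq_sum]
  simp [add_comm]

theorem card_nonneutral_slots (h : ¬ τ.HasDoubleDescent) :
    #{p : Fin (n + 1) | ¬ τ.DescentAt p ∧ ¬ IsNeutralSlot p τ} + 2 * (numDescents τ + 1) =
      n + 2 := by
  have hsplit : #{p : Fin (n + 1) | ¬ τ.DescentAt p ∧ ¬ IsNeutralSlot p τ} +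
      #{p : Fin (n + 1) | ¬ τ.DescentAt p ∧ IsNeutralSlot p τ} +
        #{p : Fin (n + 1) | τ.DescentAt p} = n + 1 := by
    simp only [card_filter, ← sum_add_distrib]
    rw [sum_congr rfl (g := fun _ => 1) fun p _ => by split_ifs <;> simp_all, sum_const,
      card_univ, Fintype.card_fin, smul_eq_mul, mul_one]
  rw [card_neutral_slots τ h, card_descentAt_slots] at hsplit
  omega

theorem card_fiber_numDescents_insertMax (hτ : ¬ τ.HasDoubleDescent) (c : ℕ) :
    Fintype.card {p : {p : Fin (n + 1) // ¬ τ.DescentAt p} //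
        numDescents (insertMax p τ) + 1 = c} =
      if c = numDescents τ + 1 then numDescents τ + 1
      else if c = numDescents τ + 1 + 1 then n + 2 - 2 * (numDescents τ + 1) else 0 := by
  rw [Fintype.card_congr (Equiv.subtypeEquivRight (q := fun p =>
      numDescents τ + 1 + (if IsNeutralSlot p.1 τ then 0 else 1) = c)
      fun p => by rw [numDescents_insertMax]; omega),
    Fintype.card_add_ite_eq,
    Fintype.card_subtype_subtype (fun p : Fin (n + 1) => ¬ τ.DescentAt p)
      (fun p => IsNeutralSlot p τ),
    Fintype.card_subtype_subtype (fun p : Fin (n + 1) => ¬ τ.DescentAt p)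
      (fun p => ¬ IsNeutralSlot p τ),
    card_neutral_slots τ hτ]
  have := card_nonneutral_slots τ hτ
  rw [show #{p : Fin (n + 1) | ¬ τ.DescentAt p ∧ ¬ IsNeutralSlot p τ} =
    n + 2 - 2 * (numDescents τ + 1) by omega]

end slots

end Equiv.Perm

namespace Inc12Tree

open Equiv Perm

variable {n : ℕ}

theorem exists_equiv_simsun_zero :
    ∃ φ : Inc12Tree 0 ≃ {σ : Perm (Fin 0) // Simsun σ},
      ∀ T : Inc12Tree 0, T.numLeaves = numDescents (φ T).val + 1 := by
  refine ⟨⟨fun _ => ⟨1, fun _ ⟨i, _⟩ => i.elim0⟩,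
    fun _ => ⟨finZeroElim, fun i => i.elim0, fun _ => by simp⟩,
    fun T => Inc12Tree.ext (funext fun i => i.elim0),
    fun σ => Subtype.ext (Equiv.ext fun i => i.elim0)⟩, fun T => ?_⟩
  simp [numLeaves_eq, childCount, numDescents]

theorem exists_equiv_simsun_succ
    (h : ∃ φ : Inc12Tree n ≃ {σ : Perm (Fin n) // Simsun σ},
      ∀ T : Inc12Tree n, T.numLeaves = numDescents (φ T).val + 1) :
    ∃ φ : Inc12Tree (n + 1) ≃ {σ : Perm (Fin (n + 1)) // Simsun σ},
      ∀ T : Inc12Tree (n + 1), T.numLeaves = numDescents (φ T).val + 1 := by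
  obtain ⟨φ, hφ⟩ := h
  obtain ⟨E, hE⟩ := Equiv.exists_sigma_comp_eq_of_card_fiber_eq φ
    (fun x : Σ T : Inc12Tree n, {v // T.childCount v ≤ 1} => (x.1.addLeaf x.2 x.2.2).numLeaves)
    (fun x : Σ τ : {τ : Perm (Fin n) // Simsun τ}, {p : Fin (n + 1) // ¬ τ.1.DescentAt p} =>
      numDescents (insertMax x.2 x.1.1) + 1)
    fun T c => by
      rw [card_fiber_numLeaves_addLeaf,
        card_fiber_numDescents_insertMax _ (not_hasDoubleDescent_of_simsun (φ T).2), ← hφ]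
  refine ⟨equivSigma.trans (E.trans insertMaxSimsunEquiv), fun T => ?_⟩
  exact (congrArg numLeaves (addLeaf_eraseLast T)).symm.trans (hE (equivSigma T)).symm

end Inc12Tree

/-- There is a bijection between increasing 1-2 trees on `{0,…,n}` and simsun
permutations in `S_n`, carrying a tree with `k+1` leaves to a simsun
permutation with exactly `k` descents. -/
theorem inc12Tree_equiv_simsun (n : ℕ) :
    ∃ φ : Inc12Tree n ≃ {σ : Equiv.Perm (Fin n) // Simsun σ},
      ∀ T : Inc12Tree n, T.numLeaves = numDescents (φ T).val + 1 := by
  induction n with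
  | zero => exact Inc12Tree.exists_equiv_simsun_zero
  | succ n ih => exact Inc12Tree.exists_equiv_simsun_succ ih
end

section
/- The number of increasing 1-2 trees on n+1 unlabeled vertices, counted as ordered trees (the order of subtrees matters), equals the n-th Motzkin number M_n. -/
/-- Ordered (plane) 1-2 trees: every vertex has at most two children and the
left-right order of children matters. -/
inductive OTree where
  | leaf : OTree
  | one : OTree → OTree
  | two : OTree → OTree → OTree

def OTree.size : OTree → ℕ
  | .leaf => 1
  | .one t => 1 + t.size
  | .two l r => 1 + l.size + r.size
/-!
Reading a tree in preorder, a vertex with one child is a level step and a vertex with two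
children is an up step before its left subtree and a down step between its subtrees:
`t ↦ 0 :: t`, `(l, r) ↦ 1 :: l ++ -1 :: r`, and a leaf is the empty path. Every nonempty
Motzkin path decomposes uniquely in this way, by cutting a path starting with an up step at its
first return to the axis, so the encoding is a bijection shifting the size by one.
-/

/-- The path of steps `p`, started at height `c`, never goes below the axis. -/
def StaysNonneg (c : ℤ) (p : List ℤ) : Prop :=
  ∀ t : List ℤ, t <+: p → 0 ≤ c + t.sum

section StaysNonneg

variable {c x : ℤ} {p q : List ℤ}

@[simp]
theorem staysNonneg_nil : StaysNonneg c [] ↔ 0 ≤ c := by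
  simp [StaysNonneg]

theorem StaysNonneg.nonneg (h : StaysNonneg c p) : 0 ≤ c := by
  simpa using h [] List.nil_prefix

@[simp]
theorem staysNonneg_cons : StaysNonneg c (x :: p) ↔ 0 ≤ c ∧ StaysNonneg (c + x) p := by
  simp only [StaysNonneg, List.prefix_cons_iff]
  constructor
  · intro h
    refine ⟨by simpa using h [] (Or.inl rfl), fun t ht => ?_⟩
    simpa [add_assoc] using h (x :: t) (Or.inr ⟨t, rfl, ht⟩)
  · rintro ⟨hc, h⟩ t (rfl | ⟨t, rfl, ht⟩)
    · simpa using hc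
    · simpa [add_assoc] using h t ht

@[simp]
theorem staysNonneg_append :
    StaysNonneg c (p ++ q) ↔ StaysNonneg c p ∧ StaysNonneg (c + p.sum) q := by
  induction p generalizing c with
  | nil => simpa using fun h : StaysNonneg c q => h.nonneg
  | cons x p ih =>
    simp only [List.cons_append, staysNonneg_cons, ih, List.sum_cons, add_assoc, and_assoc]

theorem not_staysNonneg_append_neg_one (h : c + p.sum = 0) : ¬ StaysNonneg c (p ++ -1 :: q) := by
  simp only [staysNonneg_append, staysNonneg_cons, h]
  exact fun ⟨_, _, hq⟩ => absurd hq.nonneg (by norm_num)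

/-- Cut at the first step below the axis: as steps are `≥ -1`, it is a down step from
height `0`. -/
theorem exists_eq_append_neg_one (hc : 0 ≤ c) (hp : ∀ s ∈ p, -1 ≤ s)
    (hsum : c + p.sum < 0) :
    ∃ A B, p = A ++ -1 :: B ∧ c + A.sum = 0 ∧ StaysNonneg c A := by
  induction p generalizing c with
  | nil => simp at hsum; omega
  | cons x p ih =>
    have hx : -1 ≤ x := hp x List.mem_cons_self
    by_cases hcx : c + x < 0
    · have hx : x = -1 := by omega
      exact ⟨[], p, by simp [hx], by simp; omega, by simpa using hc⟩
    · obtain ⟨A, B, rfl, hA, hAs⟩ := ih (c := c + x) (by omega)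
        (fun s hs => hp s (List.mem_cons_of_mem x hs)) (by simp at hsum; omega)
      exact ⟨x :: A, B, rfl, by simp; omega, staysNonneg_cons.mpr ⟨hc, hAs⟩⟩

end StaysNonneg

section MotzkinPath

variable {p A A' B B' : List ℤ}

theorem motzkinPath_iff :
    MotzkinPath p ↔
      (∀ s ∈ p, s = 1 ∨ s = -1 ∨ s = 0) ∧ StaysNonneg 0 p ∧ p.sum = 0 := by
  simp [MotzkinPath, StaysNonneg]

theorem MotzkinPath.nil : MotzkinPath [] := by
  simp [motzkinPath_iff]

@[simp]
theorem motzkinPath_zero_cons : MotzkinPath (0 :: p) ↔ MotzkinPath p := by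
  simp [motzkinPath_iff]

theorem MotzkinPath.up_down (hA : MotzkinPath A) (hB : MotzkinPath B) :
    MotzkinPath (1 :: (A ++ -1 :: B)) := by
  rw [motzkinPath_iff] at *
  obtain ⟨hAs, hAn, hA0⟩ := hA
  obtain ⟨hBs, hBn, hB0⟩ := hB
  refine ⟨?_, ?_, by simp [hA0, hB0]⟩
  · simp only [List.mem_cons, List.mem_append]
    rintro s (rfl | hs | rfl | hs) <;> simp [*]
  · simp only [staysNonneg_cons, staysNonneg_append, hA0]
    refine ⟨le_rfl, ?_, by norm_num, by simpa using hBn⟩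
    intro t ht
    have := hAn t ht
    omega

theorem MotzkinPath.eq_nil_or (h : MotzkinPath p) :
    p = [] ∨ (∃ q, p = 0 :: q ∧ MotzkinPath q) ∨
      ∃ A B, p = 1 :: (A ++ -1 :: B) ∧ MotzkinPath A ∧ MotzkinPath B := by
  rcases p with _ | ⟨x, q⟩
  · exact Or.inl rfl
  obtain ⟨hs, hn, h0⟩ := motzkinPath_iff.mp h
  rcases hs x List.mem_cons_self with rfl | rfl | rfl
  · obtain ⟨A, B, rfl, hA0, hAn⟩ := exists_eq_append_neg_one le_rfl
      (fun s hs' => by rcases hs s (List.mem_cons_of_mem _ hs') with h | h | h <;> omega)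
      (by simp at h0; omega)
    simp only [zero_add] at hA0
    refine Or.inr (Or.inr ⟨A, B, rfl, ?_, ?_⟩) <;> rw [motzkinPath_iff]
    · exact ⟨fun s hs' => hs s (by simp [hs']), hAn, hA0⟩
    · simp only [staysNonneg_cons, staysNonneg_append, hA0] at hn
      refine ⟨fun s hs' => hs s (by simp [hs']), by simpa using hn.2.2.2, ?_⟩
      simpa [hA0] using h0
  · exact absurd (staysNonneg_cons.mp hn).2.nonneg (by norm_num)
  · exact Or.inr (Or.inl ⟨q, rfl, motzkinPath_zero_cons.mp h⟩)

theorem MotzkinPath.append_neg_one_inj (hA : MotzkinPath A) (hA' : MotzkinPath A')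
    (h : A ++ -1 :: B = A' ++ -1 :: B') : A = A' ∧ B = B' := by
  rw [motzkinPath_iff] at hA hA'
  rcases List.append_eq_append_iff.mp h with
    ⟨_ | ⟨x, C⟩, rfl, hB⟩ | ⟨_ | ⟨x, C⟩, rfl, hB⟩
  · simp_all
  · obtain ⟨rfl, -⟩ := List.cons_eq_cons.mp hB
    exact absurd hA'.2.1 (not_staysNonneg_append_neg_one (by simpa using hA.2.2))
  · simp_all
  · obtain ⟨rfl, -⟩ := List.cons_eq_cons.mp hB
    exact absurd hA.2.1 (not_staysNonneg_append_neg_one (by simpa using hA'.2.2))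

end MotzkinPath

namespace OTree

def toPath : OTree → List ℤ
  | leaf => []
  | one t => 0 :: t.toPath
  | two l r => 1 :: (l.toPath ++ -1 :: r.toPath)

theorem size_eq_length_toPath_add_one (t : OTree) : t.size = t.toPath.length + 1 := by
  induction t with
  | leaf => rfl
  | one t ih => simp [size, toPath, ih]; omega
  | two l r ihl ihr => simp [size, toPath, ihl, ihr]; omega

theorem motzkinPath_toPath (t : OTree) : MotzkinPath t.toPath := by
  induction t with
  | leaf => exact MotzkinPath.nil
  | one t ih => simpa [toPath] using ih
  | two l r ihl ihr => exact ihl.up_down ihr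

theorem toPath_injective : Function.Injective toPath := by
  intro t s h
  induction t generalizing s with
  | leaf => cases s <;> simp_all [toPath]
  | one t ih =>
    cases s with
    | one s => exact congrArg one (ih (List.cons.inj h).2)
    | _ => simp [toPath] at h
  | two l r ihl ihr =>
    cases s with
    | two l' r' =>
      simp only [toPath, List.cons.injEq, true_and] at h
      obtain ⟨hl, hr⟩ := (motzkinPath_toPath l).append_neg_one_inj (motzkinPath_toPath l') h
      rw [ihl hl, ihr hr]
    | _ => simp [toPath] at h

theorem exists_toPath_eq {p : List ℤ} (hp : MotzkinPath p) : ∃ t : OTree, t.toPath = p := by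
  induction hlen : p.length using Nat.strong_induction_on generalizing p with
  | _ n ih =>
    rcases hp.eq_nil_or with rfl | ⟨q, rfl, hq⟩ | ⟨A, B, rfl, hA, hB⟩
    · exact ⟨leaf, rfl⟩
    · obtain ⟨t, rfl⟩ := ih q.length (by simp [← hlen]) hq rfl
      exact ⟨one t, rfl⟩
    · obtain ⟨l, rfl⟩ := ih A.length (by simp [← hlen]) hA rfl
      obtain ⟨r, rfl⟩ := ih B.length (by simp [← hlen]; omega) hB rfl
      exact ⟨two l r, rfl⟩

noncomputable def equivMotzkinPath : OTree ≃ {p : List ℤ // MotzkinPath p} :=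
  Equiv.ofBijective (fun t => ⟨t.toPath, motzkinPath_toPath t⟩)
    ⟨fun _ _ h => toPath_injective (congrArg Subtype.val h),
      fun p => (exists_toPath_eq p.2).imp fun _ h => Subtype.ext h⟩

end OTree

/-- The number of ordered 1-2 trees with `n+1` vertices equals the `n`-th
Motzkin number. -/
theorem card_orderedTrees_eq_motzkin (n : ℕ) :
    Nat.card {t : OTree // t.size = n + 1} =
      Nat.card {p : List ℤ // p.length = n ∧ MotzkinPath p} := by
  refine Nat.card_congr ((OTree.equivMotzkinPath.subtypeEquiv fun t => ?_).trans
    ((Equiv.subtypeSubtypeEquivSubtypeInter _ _).trans (Equiv.subtypeEquivRight fun _ => and_comm)))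
  change t.size = n + 1 ↔ t.toPath.length = n
  rw [t.size_eq_length_toPath_add_one, Nat.add_right_cancel_iff]
end

section
/- If a simsun permutation σ ∈ S_n either contains no 4132-pattern, or every occurrence of a 4132-pattern in σ is contained in an occurrence of a 51342-pattern, then σ^{-1} is also simsun. -/
/-!
A double descent of `σ⁻¹` restricted to the values `< k` is, read in `σ`, a triple of positions
`c < b < a < k` with `σ a < σ b < σ c` such that `b` is the only position `< k` whose value lies
strictly between `σ a` and `σ c`. If some position between `c` and `b` carries a value below `σ a`,
the four positions form a 4132-pattern; the only extra entry of a 51342-pattern containing it would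
be a position `< k` with value strictly between `σ a` and `σ c`, which is impossible. Otherwise let
`m` be the first position after `b` with `σ m < σ b`: all positions strictly between `c` and `b`,
or between `b` and `m`, carry values above `σ c`, so `c, b, m` is a double descent of `σ`
restricted to the values `≤ σ c`.
-/

section

variable {n : ℕ} {σ : Equiv.Perm (Fin n)}

/-- A double descent of the restriction of `σ⁻¹` to the values `< k`, read in `σ`. -/
def IsInvDoubleDescent (σ : Equiv.Perm (Fin n)) (k : ℕ) (c b a : Fin n) : Prop :=
  c < b ∧ b < a ∧ a.val < k ∧ σ a < σ b ∧ σ b < σ c ∧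
    ∀ p : Fin n, p.val < k → σ a < σ p → σ p < σ c → p = b

theorem exists_isInvDoubleDescent_of_not_simsun_inv (h : ¬ Simsun σ⁻¹) :
    ∃ k c b a, IsInvDoubleDescent σ k c b a := by
  simp only [Simsun, not_forall, not_not] at h
  obtain ⟨k, i, j, l, hij, hjl, hik, hjk, hlk, hlj, hji, hgap₁, hgap₂⟩ := h
  refine ⟨k, σ⁻¹ l, σ⁻¹ j, σ⁻¹ i, hlj, hji, hik, by simpa, by simpa, fun p hp hip hpl ↦ ?_⟩
  simp only [Equiv.Perm.coe_inv, Equiv.apply_symm_apply] at hip hpl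
  rcases lt_trichotomy (σ p) j with hpj | rfl | hpj
  · have := hgap₁ (σ p) hip hpj
    simp only [Equiv.Perm.coe_inv, Equiv.symm_apply_apply] at this
    omega
  · simp
  · have := hgap₂ (σ p) hpj hpl
    simp only [Equiv.Perm.coe_inv, Equiv.symm_apply_apply] at this
    omega

theorem Simsun.exists_lt_of_doubleDescent (hσ : Simsun σ) {c b m : Fin n} (hcb : c < b)
    (hbm : b < m) (hmb : σ m < σ b) (hbc : σ b < σ c) :
    ∃ p, (c < p ∧ p < b ∨ b < p ∧ p < m) ∧ σ p < σ c := by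
  by_contra! hnone
  refine hσ (σ c + 1) ⟨c, b, m, hcb, hbm, by omega, by omega, by omega, hmb, hbc, ?_, ?_⟩
  · intro p hcp hpb
    have := lt_of_le_of_ne (hnone p (Or.inl ⟨hcp, hpb⟩)) (σ.injective.ne (by omega))
    omega
  · intro p hbp hpm
    have := lt_of_le_of_ne (hnone p (Or.inr ⟨hbp, hpm⟩)) (σ.injective.ne (by omega))
    omega

namespace IsInvDoubleDescent

variable {k : ℕ} {c b a : Fin n}

theorem exists_lt_between (hd : IsInvDoubleDescent σ k c b a) (hσ : Simsun σ) :
    ∃ p, c < p ∧ p < b ∧ σ p < σ a := by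
  obtain ⟨hcb, hba, hak, hab, hbc, honly⟩ := hd
  by_contra! hnone
  obtain ⟨m, hmin⟩ :=
    exists_minimal_of_wellFoundedLT (fun p ↦ b < p ∧ σ p < σ b) ⟨a, hba, hab⟩
  obtain ⟨hbm, hmb⟩ := hmin.prop
  have hma : m ≤ a := by
    by_contra! ham
    exact hmin.not_lt ⟨hba, hab⟩ ham
  obtain ⟨p, hp, hpc⟩ := hσ.exists_lt_of_doubleDescent hcb hbm hmb hbc
  rcases hp with ⟨hcp, hpb⟩ | ⟨hbp, hpm⟩
  · have hpa : σ a < σ p := lt_of_le_of_ne (hnone p hcp hpb) (σ.injective.ne (by omega))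
    have := honly p (by omega) hpa hpc
    omega
  · have hbp' : σ b < σ p := by
      refine lt_of_le_of_ne ?_ (σ.injective.ne (by omega))
      by_contra! hpb
      exact hmin.not_lt ⟨hbp, hpb⟩ hpm
    have := honly p (by omega) (hab.trans hbp') hpc
    omega

theorem pattern4132At (hd : IsInvDoubleDescent σ k c b a) {p : Fin n} (hcp : c < p)
    (hpb : p < b) (hpa : σ p < σ a) : Pattern4132At σ c p b a :=
  ⟨hcp, hpb, hd.2.1, hpa, hd.2.2.2.1, hd.2.2.2.2.1⟩

theorem not_exists_extra (hd : IsInvDoubleDescent σ k c b a) {p : Fin n} :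
    ¬ ∃ y, p < y ∧ y < b ∧ σ a < σ y ∧ σ y < σ b ∨ b < y ∧ y < a ∧ σ b < σ y ∧ σ y < σ c := by
  obtain ⟨hcb, hba, hak, hab, hbc, honly⟩ := hd
  rintro ⟨y, ⟨-, hyb, hay, hyb'⟩ | ⟨hby, hya, hby', hyc⟩⟩
  · have := honly y (by omega) hay (hyb'.trans hbc)
    omega
  · have := honly y (by omega) (hab.trans hby') hyc
    omega

end IsInvDoubleDescent

/-- A 51342-pattern contains a 4132-pattern only by omitting its third or its fourth entry. -/
theorem Pattern51342At.exists_extra_of_subset {x₁ x₂ x₃ x₄ j₁ j₂ j₃ j₄ j₅ : Fin n}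
    (hx : Pattern4132At σ x₁ x₂ x₃ x₄) (hj : Pattern51342At σ j₁ j₂ j₃ j₄ j₅)
    (hsub : ({x₁, x₂, x₃, x₄} : Set (Fin n)) ⊆ {j₁, j₂, j₃, j₄, j₅}) :
    ∃ y, x₂ < y ∧ y < x₃ ∧ σ x₄ < σ y ∧ σ y < σ x₃ ∨
      x₃ < y ∧ y < x₄ ∧ σ x₃ < σ y ∧ σ y < σ x₁ := by
  obtain ⟨h₁₂, h₂₃, h₃₄, v₂₄, v₄₃, v₃₁⟩ := hx
  obtain ⟨g₁₂, g₂₃, g₃₄, g₄₅, w₂₅, w₅₃, w₃₄, w₄₁⟩ := hj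
  simp only [Set.insert_subset_iff, Set.singleton_subset_iff, Set.mem_insert_iff,
    Set.mem_singleton_iff] at hsub
  obtain ⟨hx₁, hx₂, hx₃, hx₄⟩ := hsub
  rcases hx₁ with rfl | rfl | rfl | rfl | rfl <;> rcases hx₂ with rfl | rfl | rfl | rfl | rfl <;>
    rcases hx₃ with rfl | rfl | rfl | rfl | rfl <;> rcases hx₄ with rfl | rfl | rfl | rfl | rfl <;>
    first
      | omega
      | exact ⟨j₃, Or.inl ⟨g₂₃, g₃₄, w₅₃, w₃₄⟩⟩
      | exact ⟨j₄, Or.inr ⟨g₃₄, g₄₅, w₃₄, w₄₁⟩⟩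

end

/-- If a simsun permutation either has no 4132-pattern, or every 4132-pattern
occurrence is contained in a 51342-pattern occurrence, then its inverse is
simsun. -/
theorem inverse_simsun_of_4132_condition {n : ℕ} (σ : Equiv.Perm (Fin n))
    (hσ : Simsun σ) (h : No4132 σ ∨ Every4132In51342 σ) :
    Simsun σ⁻¹ := by
  by_contra hinv
  obtain ⟨k, c, b, a, hd⟩ := exists_isInvDoubleDescent_of_not_simsun_inv hinv
  obtain ⟨p, hcp, hpb, hpa⟩ := hd.exists_lt_between hσ
  have hpat : Pattern4132At σ c p b a := hd.pattern4132At hcp hpb hpa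
  rcases h with hno | hevery
  · exact hno ⟨c, p, b, a, hpat⟩
  · obtain ⟨j₁, j₂, j₃, j₄, j₅, h51342, hsub⟩ := hevery c p b a hpat
    exact hd.not_exists_extra (h51342.exists_extra_of_subset hpat hsub)
end

section
/- Let σ ∈ S_n be a 213-avoiding simsun permutation. Then σ^{-1} is simsun if and only if either σ contains no 4132-pattern, or every occurrence of a 4132-pattern in σ is contained in an occurrence of a 51342-pattern. -/
/-!
If `σ⁻¹` is not simsun, `σ` has positions `i < j < l` with `σ l < σ j < σ i` such that every
other value between `σ l` and `σ i` lies right of `l`. Since `σ` is simsun, some value below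
`σ l` lies strictly between `i` and `l`, and the leftmost such value lies between `i` and `j`:
this gives a 4132-occurrence at `i, m, j, l`. The extra letter of a 51342-occurrence containing
it would be one more value between `σ l` and `σ i` left of `l`.

Conversely, if a 4132-occurrence `(i₁, i₂, i₃, i₄)` lies in no 51342-occurrence, avoidance of 213
puts the value `σ i₃ + 1` left of `i₃` and `σ i₃ - 1` right of it, so these three consecutive
values form a double descent of `σ⁻¹`.
-/

open Equiv

section

variable {n : ℕ}

theorem Fin.eq_or_eq_of_four_subset_five {x₁ x₂ x₃ x₄ y₁ y₂ y₃ y₄ y₅ : Fin n}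
    (hx₁ : x₁ < x₂) (hx₂ : x₂ < x₃) (hx₃ : x₃ < x₄)
    (hy₁ : y₁ < y₂) (hy₂ : y₂ < y₃) (hy₃ : y₃ < y₄) (hy₄ : y₄ < y₅)
    (h : ({x₁, x₂, x₃, x₄} : Set (Fin n)) ⊆ {y₁, y₂, y₃, y₄, y₅}) :
    x₁ = y₁ ∧ x₂ = y₂ ∧ x₃ = y₃ ∧ x₄ = y₄ ∨ x₁ = y₁ ∧ x₂ = y₂ ∧ x₃ = y₃ ∧ x₄ = y₅ ∨
    x₁ = y₁ ∧ x₂ = y₂ ∧ x₃ = y₄ ∧ x₄ = y₅ ∨ x₁ = y₁ ∧ x₂ = y₃ ∧ x₃ = y₄ ∧ x₄ = y₅ ∨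
    x₁ = y₂ ∧ x₂ = y₃ ∧ x₃ = y₄ ∧ x₄ = y₅ := by
  simp only [Set.insert_subset_iff, Set.singleton_subset_iff, Set.mem_insert_iff,
    Set.mem_singleton_iff] at h
  obtain ⟨h₁, h₂, h₃, h₄⟩ := h
  rcases h₁ with rfl | rfl | rfl | rfl | rfl <;> rcases h₂ with rfl | rfl | rfl | rfl | rfl <;>
    rcases h₃ with rfl | rfl | rfl | rfl | rfl <;> rcases h₄ with rfl | rfl | rfl | rfl | rfl <;>
    omega

theorem Pattern4132At.exists_extra_of_subset_51342 {σ : Perm (Fin n)}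
    {i₁ i₂ i₃ i₄ j₁ j₂ j₃ j₄ j₅ : Fin n} (hp : Pattern4132At σ i₁ i₂ i₃ i₄)
    (hq : Pattern51342At σ j₁ j₂ j₃ j₄ j₅)
    (hsub : ({i₁, i₂, i₃, i₄} : Set (Fin n)) ⊆ {j₁, j₂, j₃, j₄, j₅}) :
    ∃ t, t < i₄ ∧ t ≠ i₃ ∧ σ i₄ < σ t ∧ σ t < σ i₁ := by
  obtain ⟨h₁₂, h₂₃, h₃₄, hv₂₄, hv₄₃, hv₃₁⟩ := hp
  obtain ⟨g₁₂, g₂₃, g₃₄, g₄₅, gv₂₅, gv₅₃, gv₃₄, gv₄₁⟩ := hq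
  rcases Fin.eq_or_eq_of_four_subset_five h₁₂ h₂₃ h₃₄ g₁₂ g₂₃ g₃₄ g₄₅ hsub with
    ⟨rfl, rfl, rfl, rfl⟩ | ⟨rfl, rfl, rfl, rfl⟩ | ⟨rfl, rfl, rfl, rfl⟩ | ⟨rfl, rfl, rfl, rfl⟩ |
    ⟨rfl, rfl, rfl, rfl⟩
  · exact absurd hv₄₃ gv₃₄.asymm
  · exact ⟨j₄, g₄₅, g₃₄.ne', hv₄₃.trans gv₃₄, gv₄₁⟩
  · exact ⟨j₃, g₃₄.trans g₄₅, g₃₄.ne, gv₅₃, gv₃₄.trans gv₄₁⟩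
  · exact absurd hv₂₄ gv₅₃.asymm
  · exact absurd hv₃₁ (gv₂₅.trans (gv₅₃.trans gv₃₄)).asymm

theorem Simsun.not_double_descent {τ : Perm (Fin n)} (h : Simsun τ) {i j l : Fin n}
    (hij : i.val + 1 = j.val) (hjl : j.val + 1 = l.val) : ¬ (τ l < τ j ∧ τ j < τ i) :=
  fun ⟨hlj, hji⟩ => h n ⟨i, j, l, by omega, by omega, (τ i).isLt, (τ j).isLt, (τ l).isLt,
    hlj, hji, fun _ _ _ => by omega, fun _ _ _ => by omega⟩

theorem Simsun.exists_lt_between {σ : Perm (Fin n)} (h : Simsun σ) {i j l : Fin n}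
    (hij : i < j) (hjl : j < l) (hlj : σ l < σ j) (hji : σ j < σ i) :
    ∃ m, i < m ∧ m < l ∧ m ≠ j ∧ σ m < σ i := by
  by_contra! hbig
  have hgt : ∀ m, i < m → m < l → m ≠ j → (σ i).val + 1 ≤ (σ m).val := fun m him hml hmj =>
    lt_of_le_of_ne (hbig m him hml hmj) (σ.injective.ne him.ne)
  exact h ((σ i).val + 1) ⟨i, j, l, hij, hjl, by omega, by omega, by omega, hlj, hji,
    fun m him hmj => hgt m him (hmj.trans hjl) hmj.ne,
    fun m hjm hml => hgt m (hij.trans hjm) hml hjm.ne'⟩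

/-- How a double descent of `σ⁻¹`, in the sense of `Simsun`, looks in `σ`. -/
def IsolatedDescent (σ : Perm (Fin n)) (i j l : Fin n) : Prop :=
  i < j ∧ j < l ∧ σ l < σ j ∧ σ j < σ i ∧ ∀ m, σ l < σ m → σ m < σ i → m ≠ j → l < m

theorem exists_isolatedDescent_of_not_simsun_inv {σ : Perm (Fin n)} (h : ¬ Simsun σ⁻¹) :
    ∃ i j l, IsolatedDescent σ i j l := by
  simp only [Simsun, not_forall, not_not] at h
  obtain ⟨k, a, b, c, hab, hbc, hka, -, -, hcb, hba, hleft, hright⟩ := h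
  refine ⟨σ⁻¹ c, σ⁻¹ b, σ⁻¹ a, hcb, hba, by simpa using hab, by simpa using hbc, ?_⟩
  intro m ham hmc hmb
  have hmb' : σ m ≠ b := fun e => hmb (by simp [← e])
  rcases lt_or_gt_of_ne hmb' with hlt | hgt
  · have := hleft (σ m) (by simpa using ham) hlt
    simp only [Perm.coe_inv, symm_apply_apply] at this
    omega
  · have := hright (σ m) hgt (by simpa using hmc)
    simp only [Perm.coe_inv, symm_apply_apply] at this
    omega

namespace IsolatedDescent

variable {σ : Perm (Fin n)} {i j l : Fin n}

theorem lt_of_lt_of_ne (hd : IsolatedDescent σ i j l) {m : Fin n} (hml : m < l) (hmj : m ≠ j)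
    (hmi : σ m < σ i) : σ m < σ l :=
  lt_of_le_of_ne (not_lt.1 fun hlm => (hd.2.2.2.2 m hlm hmi hmj).asymm hml)
    (σ.injective.ne hml.ne)

theorem exists_4132 (hd : IsolatedDescent σ i j l) (hσ : Simsun σ) :
    ∃ m, Pattern4132At σ i m j l := by
  have ⟨hij, hjl, hlj, hji, _⟩ := hd
  obtain ⟨m₀, him₀, hm₀l, hm₀j, hm₀i⟩ := hσ.exists_lt_between hij hjl hlj hji
  obtain ⟨m, ⟨him, hml, hmj, hm⟩, hmin⟩ := wellFounded_lt.has_min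
    {m | i < m ∧ m < l ∧ m ≠ j ∧ σ m < σ l}
    ⟨m₀, him₀, hm₀l, hm₀j, hd.lt_of_lt_of_ne hm₀l hm₀j hm₀i⟩
  refine ⟨m, him, (lt_or_gt_of_ne hmj).resolve_right fun hjm => ?_, hjl, hm, hlj, hji⟩
  -- otherwise `σ` being simsun at `i, j, m` yields a candidate left of `m`
  obtain ⟨m', him', hm'm, hm'j, hm'i⟩ := hσ.exists_lt_between hij hjm (hm.trans hlj) hji
  exact hmin m' ⟨him', hm'm.trans hml, hm'j, hd.lt_of_lt_of_ne (hm'm.trans hml) hm'j hm'i⟩ hm'm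

theorem not_subset_51342 (hd : IsolatedDescent σ i j l) {m j₁ j₂ j₃ j₄ j₅ : Fin n}
    (hp : Pattern4132At σ i m j l) (hq : Pattern51342At σ j₁ j₂ j₃ j₄ j₅) :
    ¬ ({i, m, j, l} : Set (Fin n)) ⊆ {j₁, j₂, j₃, j₄, j₅} := fun hsub => by
  obtain ⟨t, htl, htj, hlt, hti⟩ := hp.exists_extra_of_subset_51342 hq hsub
  exact (hd.2.2.2.2 t hlt hti htj).asymm htl

end IsolatedDescent

section Avoids213

variable {σ : Perm (Fin n)} (h213 : Avoids213 σ) {i₁ i₂ i₃ i₄ : Fin n}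
  (hp : Pattern4132At σ i₁ i₂ i₃ i₄)
include h213 hp

theorem Pattern4132At.pattern51342At_of_succ_right {p : Fin n}
    (hval : (σ p).val = (σ i₃).val + 1) (hp₃ : i₃ < p) : Pattern51342At σ i₁ i₂ i₃ p i₄ := by
  obtain ⟨h₁₂, h₂₃, h₃₄, hv₂₄, hv₄₃, hv₃₁⟩ := hp
  have hp₄ : p < i₄ := by
    rcases lt_trichotomy p i₄ with h | rfl | h
    · exact h
    · omega
    · exact absurd ⟨i₃, i₄, p, h₃₄, h, hv₄₃, by omega⟩ h213
  have hv₁ : σ p ≠ σ i₁ := σ.injective.ne (h₁₂.trans (h₂₃.trans hp₃)).ne'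
  exact ⟨h₁₂, h₂₃, hp₃, hp₄, hv₂₄, hv₄₃, by omega, by omega⟩

theorem Pattern4132At.pattern51342At_of_pred_left {q : Fin n}
    (hval : (σ q).val + 1 = (σ i₃).val) (hq₃ : q < i₃) : Pattern51342At σ i₁ i₂ q i₃ i₄ := by
  obtain ⟨h₁₂, h₂₃, h₃₄, hv₂₄, hv₄₃, hv₃₁⟩ := hp
  have h₂q : i₂ < q := by
    rcases lt_trichotomy q i₂ with h | rfl | h
    · exact absurd ⟨q, i₂, i₃, h, h₂₃, by omega, by omega⟩ h213
    · omega
    · exact h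
  have hv₄ : σ i₄ ≠ σ q := σ.injective.ne (hq₃.trans h₃₄).ne'
  exact ⟨h₁₂, h₂q, hq₃, h₃₄, hv₂₄, by omega, by omega, hv₃₁⟩

end Avoids213

theorem every4132In51342_of_simsun_inv {σ : Perm (Fin n)} (h213 : Avoids213 σ)
    (hinv : Simsun σ⁻¹) : Every4132In51342 σ := by
  intro i₁ i₂ i₃ i₄ hp
  have ⟨_, _, _, hv₂₄, hv₄₃, hv₃₁⟩ := hp
  let u : Fin n := ⟨(σ i₃).val - 1, by omega⟩
  let w : Fin n := ⟨(σ i₃).val + 1, by omega⟩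
  have hu : (σ (σ⁻¹ u)).val + 1 = (σ i₃).val := by
    simp only [Perm.coe_inv, apply_symm_apply, u]
    omega
  have hw : (σ (σ⁻¹ w)).val = (σ i₃).val + 1 := by simp [w]
  by_cases hw₃ : i₃ < σ⁻¹ w
  · exact ⟨_, _, _, _, _, hp.pattern51342At_of_succ_right h213 hw hw₃,
      by simp [Set.insert_subset_iff]⟩
  by_cases hu₃ : σ⁻¹ u < i₃
  · exact ⟨_, _, _, _, _, hp.pattern51342At_of_pred_left h213 hu hu₃,
      by simp [Set.insert_subset_iff]⟩
  have hw₃' : σ⁻¹ w < i₃ := lt_of_le_of_ne (not_lt.1 hw₃) fun e => by rw [e] at hw; omega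
  have hu₃' : i₃ < σ⁻¹ u := lt_of_le_of_ne (not_lt.1 hu₃) fun e => by rw [← e] at hu; omega
  exact (hinv.not_double_descent (i := u) (l := w) (by simp only [u]; omega) rfl
    ⟨by simpa using hw₃', by simpa using hu₃'⟩).elim

end

/-- For a 213-avoiding simsun permutation `σ`, the inverse `σ⁻¹` is simsun iff
either `σ` has no 4132-pattern, or every 4132-pattern occurrence in `σ` is
contained in a 51342-pattern occurrence. -/
theorem inverse_simsun_iff_4132_condition {n : ℕ} (σ : Equiv.Perm (Fin n))
    (hσ : Simsun σ) (h213 : Avoids213 σ) :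
    Simsun σ⁻¹ ↔ (No4132 σ ∨ Every4132In51342 σ) := by
  refine ⟨fun hinv => Or.inr (every4132In51342_of_simsun_inv h213 hinv), fun h => ?_⟩
  by_contra hinv
  obtain ⟨i, j, l, hd⟩ := exists_isolatedDescent_of_not_simsun_inv hinv
  obtain ⟨m, hp⟩ := hd.exists_4132 hσ
  rcases h with h | h
  · exact h ⟨i, m, j, l, hp⟩
  · obtain ⟨j₁, j₂, j₃, j₄, j₅, hq, hsub⟩ := h i m j l hp
    exact hd.not_subset_51342 hp hq hsub
end

section
/- The number of simsun permutations in S_n avoiding both 231 and 213 equals the Fibonacci number F_{n+1}. -/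
/-!
A permutation avoids 231 and 213 exactly when each entry is either larger or smaller than all
entries to its right. Recording this as a word `c` (`c i` iff `σ i` is larger, i.e. iff `i` is a
descent), the permutation is recovered from `c`: an entry marked `true` is `n - 1` minus the number
of earlier `true` marks, one marked `false` is the number of earlier `false` marks, and every word
arises. The last letter is `false`, and since such a permutation has only consecutive double
descents, it is simsun iff `c` has no two adjacent `true`s. The words in which every `true` is
immediately followed by a `false` satisfy `w (n + 2) = w (n + 1) + w n`: split off an initial
`false` or `true, false`.
-/

open Finset Function

section SuffixExtremal

variable {ι α : Type*}

def SuffixExtremal [LT ι] [LT α] (c : ι → Bool) (f : ι → α) : Prop :=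
  ∀ ⦃i j⦄, i < j → (c i = true → f j < f i) ∧ (c i = false → f i < f j)

variable {c : ι → Bool} {f : ι → α}

theorem SuffixExtremal.lt_iff [LT ι] [LinearOrder α] (h : SuffixExtremal c f) {i j : ι}
    (hij : i < j) : f j < f i ↔ c i = true := by
  cases hc : c i
  · simpa using ((h hij).2 hc).le
  · simpa using (h hij).1 hc

theorem SuffixExtremal.injective [LinearOrder ι] [Preorder α] (h : SuffixExtremal c f) :
    Injective f := by
  have hne : ∀ ⦃i j⦄, i < j → f i ≠ f j := fun i j hij => by
    cases hc : c i
    · exact ((h hij).2 hc).ne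
    · exact ((h hij).1 hc).ne'
  intro i j hf
  by_contra hij
  exact (Ne.lt_or_gt hij).elim (hne · hf) (hne · hf.symm)

end SuffixExtremal

variable {n : ℕ}

theorem SuffixExtremal.avoids231 {c : Fin n → Bool} {σ : Equiv.Perm (Fin n)}
    (h : SuffixExtremal c σ) : Avoids231 σ := by
  rintro ⟨i, j, k, hij, hjk, hki, hij'⟩
  exact ((h hij).1 ((h.lt_iff (hij.trans hjk)).1 hki)).asymm hij'

theorem SuffixExtremal.avoids213 {c : Fin n → Bool} {σ : Equiv.Perm (Fin n)}
    (h : SuffixExtremal c σ) : Avoids213 σ := by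
  rintro ⟨i, j, k, hij, hjk, hji, hik⟩
  exact ((h (hij.trans hjk)).1 ((h.lt_iff hij).1 hji)).asymm hik

def nonRLMinWord (σ : Equiv.Perm (Fin n)) (i : Fin n) : Bool :=
  decide (∃ j, i < j ∧ σ j < σ i)

theorem suffixExtremal_nonRLMinWord {σ : Equiv.Perm (Fin n)} (h231 : Avoids231 σ)
    (h213 : Avoids213 σ) : SuffixExtremal (nonRLMinWord σ) σ := by
  intro i j hij
  have hne : σ i ≠ σ j := σ.injective.ne hij.ne
  simp only [nonRLMinWord, decide_eq_true_eq, decide_eq_false_iff_not, not_exists, not_and,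
    not_lt]
  refine ⟨fun ⟨k, hik, hki⟩ => ?_, fun hmin => (hmin j hij).lt_of_ne hne⟩
  by_contra! hij'
  replace hij' := hij'.lt_of_ne hne
  rcases lt_trichotomy j k with hjk | rfl | hkj
  · exact h231 ⟨i, j, k, hij, hjk, hki, hij'⟩
  · exact hki.asymm hij'
  · exact h213 ⟨i, k, j, hik, hkj, hki, hij'⟩

theorem SuffixExtremal.nonRLMinWord_eq {c : Fin n → Bool} {σ : Equiv.Perm (Fin n)}
    (h : SuffixExtremal c σ) (hc : ∀ i, c i = true → ∃ j, i < j) : nonRLMinWord σ = c := by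
  funext i
  cases hci : c i
  · simp only [nonRLMinWord, decide_eq_false_iff_not, not_exists, not_and, not_lt]
    exact fun j hij => ((h hij).2 hci).le
  · obtain ⟨j, hij⟩ := hc i hci
    exact decide_eq_true ⟨j, hij, (h hij).1 hci⟩

def countBefore (c : Fin n → Bool) (b : Bool) (i : Fin n) : ℕ := #{j ∈ Iio i | c j = b}

theorem countBefore_true_add_false (c : Fin n → Bool) (i : Fin n) :
    countBefore c true i + countBefore c false i = i := by
  rw [countBefore, countBefore, ← Fin.card_Iio i,
    ← card_filter_add_card_filter_not (s := Iio i) (fun j => c j = true)]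
  simp

theorem countBefore_lt_countBefore (c : Fin n → Bool) {i j : Fin n} (hij : i < j) :
    countBefore c (c i) i < countBefore c (c i) j := by
  refine card_lt_card ⟨fun k hk => ?_, fun hsub => ?_⟩
  · simp only [mem_filter, mem_Iio] at hk ⊢
    exact ⟨hk.1.trans hij, hk.2⟩
  · simpa using hsub (mem_filter.2 ⟨mem_Iio.2 hij, rfl⟩)

def extremalRank (c : Fin n → Bool) (i : Fin n) : ℕ :=
  if c i then n - 1 - countBefore c true i else countBefore c false i

theorem extremalRank_lt (c : Fin n → Bool) (i : Fin n) : extremalRank c i < n := by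
  have := countBefore_true_add_false c i
  unfold extremalRank
  split <;> omega

theorem suffixExtremal_extremalRank (c : Fin n → Bool) : SuffixExtremal c (extremalRank c) := by
  intro i j hij
  have hi := countBefore_true_add_false c i
  have hj := countBefore_true_add_false c j
  have hlt := countBefore_lt_countBefore c hij
  unfold extremalRank
  constructor <;> intro hci <;> rw [hci] at hlt ⊢ <;> cases c j <;>
    simp only [Bool.false_eq_true, ↓reduceIte] <;> omega

noncomputable def extremalPerm (c : Fin n → Bool) : Equiv.Perm (Fin n) :=
  Equiv.ofBijective (fun i => ⟨extremalRank c i, extremalRank_lt c i⟩) <|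
    Finite.injective_iff_bijective.mp fun _ _ hij =>
      (suffixExtremal_extremalRank c).injective (congrArg Fin.val hij)

theorem suffixExtremal_extremalPerm (c : Fin n → Bool) : SuffixExtremal c (extremalPerm c) :=
  fun _ _ hij => suffixExtremal_extremalRank c hij

theorem card_filter_apply_lt (σ : Equiv.Perm (Fin n)) (i : Fin n) : #{j | σ j < σ i} = σ i := by
  rw [← Fin.card_Iio (σ i)]
  exact card_equiv σ (by simp)

theorem card_filter_lt_apply (σ : Equiv.Perm (Fin n)) (i : Fin n) :
    #{j | σ i < σ j} = n - 1 - σ i := by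
  rw [← Fin.card_Ioi (σ i)]
  exact card_equiv σ (by simp)

theorem SuffixExtremal.val_eq_extremalRank {c : Fin n → Bool} {σ : Equiv.Perm (Fin n)}
    (h : SuffixExtremal c σ) (i : Fin n) : (σ i : ℕ) = extremalRank c i := by
  have lt_of_wrong_side {j : Fin n} (hj : cond (c i) (σ i < σ j) (σ j < σ i)) : j < i := by
    by_contra! hij
    rcases hij.eq_or_lt with rfl | hij
    · simp at hj
    · cases hci : c i <;> rw [hci] at hj
      exacts [((h hij).2 hci).asymm hj, ((h hij).1 hci).asymm hj]
  unfold extremalRank countBefore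
  cases hci : c i
  · rw [if_neg (by simp), ← card_filter_apply_lt]
    congr 1
    ext j
    simp only [mem_filter, mem_univ, true_and, mem_Iio]
    refine ⟨fun hj => ?_, fun ⟨hji, hcj⟩ => (h hji).2 hcj⟩
    have hji := lt_of_wrong_side (by rwa [hci])
    exact ⟨hji, by rw [← Bool.not_eq_true, ← h.lt_iff hji, not_lt]; exact hj.le⟩
  · suffices #{j ∈ Iio i | c j = true} = #{j | σ i < σ j} by
      rw [if_pos rfl, this, card_filter_lt_apply]
      omega
    congr 1
    ext j
    simp only [mem_filter, mem_univ, true_and, mem_Iio]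
    refine ⟨fun ⟨hji, hcj⟩ => (h hji).1 hcj, fun hj => ?_⟩
    have hji := lt_of_wrong_side (by rwa [hci])
    exact ⟨hji, (h.lt_iff hji).1 hj⟩

def TrueFollowedByFalse (c : Fin n → Bool) : Prop :=
  ∀ i : Fin n, c i = true → ∃ h : (i : ℕ) + 1 < n, c ⟨i + 1, h⟩ = false

theorem TrueFollowedByFalse.exists_gt {c : Fin n → Bool} (hc : TrueFollowedByFalse c) (i : Fin n)
    (hi : c i = true) : ∃ j, i < j :=
  ⟨⟨i + 1, (hc i hi).1⟩, Nat.lt_succ_self _⟩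

theorem nonRLMinWord_exists_gt (σ : Equiv.Perm (Fin n)) (i : Fin n)
    (hi : nonRLMinWord σ i = true) : ∃ j, i < j :=
  (of_decide_eq_true hi).imp fun _ => And.left

theorem SuffixExtremal.simsun_iff {c : Fin n → Bool} {σ : Equiv.Perm (Fin n)}
    (h : SuffixExtremal c σ) (hc : ∀ i, c i = true → ∃ j, i < j) :
    Simsun σ ↔ TrueFollowedByFalse c := by
  constructor
  · intro hs i hci
    obtain ⟨j, hij⟩ := hc i hci
    have hi1 : (i : ℕ) + 1 < n := by omega
    refine ⟨hi1, Bool.not_eq_true _ ▸ fun hci1 => ?_⟩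
    obtain ⟨l, hl⟩ := hc _ hci1
    have hi2 : (i : ℕ) + 2 < n := by have : (i : ℕ) + 1 < l := hl; omega
    have hi : i < ⟨i + 1, hi1⟩ := Nat.lt_succ_self _
    have hi' : (⟨i + 1, hi1⟩ : Fin n) < ⟨i + 2, hi2⟩ := Nat.lt_succ_self _
    refine hs n ⟨i, _, _, hi, hi', (σ _).isLt, (σ _).isLt, (σ _).isLt, (h hi').1 hci1,
      (h hi).1 hci, fun m h₁ h₂ => ?_, fun m h₁ h₂ => ?_⟩ <;>
    · simp only [Fin.lt_def] at h₁ h₂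
      omega
  · rintro hw k ⟨i, j, l, hij, hjl, hik, -, -, hlj, hji, hgap, -⟩
    obtain ⟨hi1, hci1⟩ := hw i ((h.lt_iff hij).1 hji)
    -- every entry strictly between `i` and `j` lies below `σ i < k`, so there is none
    have hj : j = ⟨i + 1, hi1⟩ := by
      by_contra hne
      have hm : i < ⟨i + 1, hi1⟩ := Nat.lt_succ_self _
      have hmj : (⟨i + 1, hi1⟩ : Fin n) < j := by
        have : (j : ℕ) ≠ i + 1 := fun e => hne (Fin.ext e)
        change (i : ℕ) + 1 < j
        omega
      have hσm : (σ ⟨i + 1, hi1⟩ : ℕ) < σ i := (h hm).1 ((h.lt_iff hij).1 hji)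
      exact (hgap _ hm hmj).not_gt (hσm.trans hik)
    subst hj
    exact Bool.false_ne_true (hci1.symm.trans ((h.lt_iff hjl).1 hlj))

noncomputable def simsunAvoid231213Equiv (n : ℕ) :
    {σ : Equiv.Perm (Fin n) // Simsun σ ∧ Avoids231 σ ∧ Avoids213 σ} ≃
      {c : Fin n → Bool // TrueFollowedByFalse c} where
  toFun σ := ⟨nonRLMinWord σ.1,
    ((suffixExtremal_nonRLMinWord σ.2.2.1 σ.2.2.2).simsun_iff
      (nonRLMinWord_exists_gt σ.1)).1 σ.2.1⟩
  invFun c := ⟨extremalPerm c.1,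
    ((suffixExtremal_extremalPerm c.1).simsun_iff c.2.exists_gt).2 c.2,
    (suffixExtremal_extremalPerm c.1).avoids231, (suffixExtremal_extremalPerm c.1).avoids213⟩
  left_inv σ := Subtype.ext <| Equiv.ext fun i => Fin.ext
    ((suffixExtremal_nonRLMinWord σ.2.2.1 σ.2.2.2).val_eq_extremalRank i).symm
  right_inv c := Subtype.ext <| (suffixExtremal_extremalPerm c.1).nonRLMinWord_eq c.2.exists_gt

theorem trueFollowedByFalse_cons_iff {b : Bool} {c : Fin n → Bool} :
    TrueFollowedByFalse (Fin.cons b c : Fin (n + 1) → Bool) ↔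
      (b = true → ∃ h : 0 < n, c ⟨0, h⟩ = false) ∧ TrueFollowedByFalse c := by
  have cons_mk_succ (k : ℕ) (h : k + 1 < n + 1) :
      (Fin.cons b c : Fin (n + 1) → Bool) ⟨k + 1, h⟩ = c ⟨k, Nat.lt_of_succ_lt_succ h⟩ :=
    Fin.cons_succ (α := fun _ => Bool) b c ⟨k, _⟩
  unfold TrueFollowedByFalse
  rw [Fin.forall_fin_succ]
  simp only [Fin.cons_zero, Fin.cons_succ, Fin.val_zero, Fin.val_succ, cons_mk_succ,
    Nat.add_lt_add_iff_right]

theorem TrueFollowedByFalse.tail {c : Fin (n + 1) → Bool} (hc : TrueFollowedByFalse c) :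
    TrueFollowedByFalse (Fin.tail c) :=
  (trueFollowedByFalse_cons_iff.1 ((Fin.cons_self_tail c).symm ▸ hc)).2

theorem TrueFollowedByFalse.tail_zero {c : Fin (n + 2) → Bool} (hc : TrueFollowedByFalse c)
    (h0 : c 0 = true) : Fin.tail c 0 = false :=
  ((trueFollowedByFalse_cons_iff.1 ((Fin.cons_self_tail c).symm ▸ hc)).1 h0).2

theorem trueFollowedByFalse_cons_false {c : Fin n → Bool} :
    TrueFollowedByFalse (Fin.cons false c : Fin (n + 1) → Bool) ↔ TrueFollowedByFalse c := by
  simp [trueFollowedByFalse_cons_iff]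

theorem trueFollowedByFalse_cons_true_cons_false {c : Fin n → Bool} :
    TrueFollowedByFalse
        (Fin.cons true (Fin.cons false c : Fin (n + 1) → Bool) : Fin (n + 2) → Bool) ↔
      TrueFollowedByFalse c := by
  simp [trueFollowedByFalse_cons_iff]

def trueFollowedByFalseSuccSuccEquiv (n : ℕ) :
    {c : Fin (n + 2) → Bool // TrueFollowedByFalse c} ≃
      {c : Fin (n + 1) → Bool // TrueFollowedByFalse c} ⊕
        {c : Fin n → Bool // TrueFollowedByFalse c} where
  toFun c := if c.1 0 then .inr ⟨Fin.tail (Fin.tail c.1), c.2.tail.tail⟩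
    else .inl ⟨Fin.tail c.1, c.2.tail⟩
  invFun := Sum.elim (fun d => ⟨Fin.cons false d.1, trueFollowedByFalse_cons_false.2 d.2⟩)
    fun d => ⟨Fin.cons true (Fin.cons false d.1), trueFollowedByFalse_cons_true_cons_false.2 d.2⟩
  left_inv := by
    rintro ⟨c, hc⟩
    apply Subtype.ext
    cases h0 : c 0
    · simp only [h0, Bool.false_eq_true, ↓reduceIte, Sum.elim_inl]
      rw [← h0, Fin.cons_self_tail]
    · simp only [h0, ↓reduceIte, Sum.elim_inr]
      rw [← h0, ← hc.tail_zero h0, Fin.cons_self_tail, Fin.cons_self_tail]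
  right_inv := by
    rintro (d | d) <;> simp

theorem card_trueFollowedByFalse :
    ∀ n, Nat.card {c : Fin n → Bool // TrueFollowedByFalse c} = Nat.fib (n + 1)
  | 0 => Nat.card_eq_one_iff_unique.2 ⟨inferInstance, ⟨⟨Fin.elim0, fun i => i.elim0⟩⟩⟩
  | 1 => by
    refine Nat.card_eq_one_iff_unique.2 ⟨⟨fun c d => ?_⟩, ⟨⟨fun _ => false, fun _ => by simp⟩⟩⟩
    have last_false (c : {c : Fin 1 → Bool // TrueFollowedByFalse c}) : c.1 0 = false := by
      simpa using fun h => (c.2 0 h).1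
    exact Subtype.ext <| funext fun i => by rw [Fin.fin_one_eq_zero i, last_false, last_false]
  | n + 2 => by
    rw [Nat.card_congr (trueFollowedByFalseSuccSuccEquiv n), Nat.card_sum,
      card_trueFollowedByFalse (n + 1), card_trueFollowedByFalse n]
    exact (Nat.fib_add_two.trans (add_comm _ _)).symm

/-- The number of simsun permutations in `S_n` avoiding both 231 and 213
equals the Fibonacci number `F_{n+1}`. -/
theorem card_simsun_avoid231_213_eq_fib (n : ℕ) :
    Nat.card {σ : Equiv.Perm (Fin n) // Simsun σ ∧ Avoids231 σ ∧ Avoids213 σ} =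
      Nat.fib (n + 1) := by
  rw [Nat.card_congr (simsunAvoid231213Equiv n), card_trueFollowedByFalse]
end

section
/- Let σ ∈ S_n be double simsun and let Γ(σ)_i = n+1−σ^{-1}_{n+1−i}. If Γ(σ) is not double simsun, then σ contains a 35142-pattern (equivalently, Γ(σ) contains a 42513-pattern). -/
/-- `Γ(σ)_i = n + 1 - σ⁻¹_{n+1-i}` (0-indexed: `Γ(σ) i = rev (σ⁻¹ (rev i))`). -/
def Gamma {n : ℕ} (σ : Equiv.Perm (Fin n)) : Equiv.Perm (Fin n) :=
  (Fin.revPerm.trans σ⁻¹).trans Fin.revPerm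

/-! Since `Γ(σ)⁻¹ = Γ(σ⁻¹)`, a failure of double simsun-ness of `Γ(σ)` yields, for `τ = σ⁻¹` or
`τ = σ`, a double descent `τ i > τ j > τ l` in the subword of `τ` formed by its large values
(reversal and complement exchange small and large values). If `τ` and `τ⁻¹` are simsun, there is
a small value at a position `p` strictly between `i` and `j` (else `i, j, j + 1` is a consecutive
double descent of `τ`), and a value strictly between `τ l` and `τ j` at a position `q < i` (else
`τ⁻¹` has a double descent among its values `≤ l`, at the values `τ l < τ j < e` with `e` minimal
above `τ j` among the values at positions `≤ i`). The positions `q < i < p < j < l` carry a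
35142-pattern; `35142` is an involution whose reverse-complement is `42513`. -/

open Equiv

section

variable {n : ℕ}

/-- A double descent `τ i > τ j > τ l` of the subword of `τ` formed by its values `≥ K`. -/
structure IsTopDoubleDescent (τ : Perm (Fin n)) (K : ℕ) (i j l : Fin n) : Prop where
  lt_mid : i < j
  mid_lt : j < l
  le_last : K ≤ (τ l).val
  last_lt_mid : τ l < τ j
  mid_lt_first : τ j < τ i
  small_left : ∀ m, i < m → m < j → (τ m).val < K
  small_right : ∀ m, j < m → m < l → (τ m).val < K

theorem gamma_apply (σ : Perm (Fin n)) (m : Fin n) : Gamma σ m = (σ⁻¹ m.rev).rev := rfl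

theorem gamma_inv (σ : Perm (Fin n)) : (Gamma σ)⁻¹ = Gamma σ⁻¹ := by
  ext x
  simp [Gamma, Perm.inv_def, Fin.revPerm_symm]

theorem DoubleSimsun.inv {σ : Perm (Fin n)} (hσ : DoubleSimsun σ) : DoubleSimsun σ⁻¹ :=
  ⟨hσ.2, by simpa using hσ.1⟩

theorem exists_isTopDoubleDescent_inv_of_not_simsun_gamma {σ : Perm (Fin n)}
    (h : ¬ Simsun (Gamma σ)) : ∃ K i j l, IsTopDoubleDescent σ⁻¹ K i j l := by
  simp only [Simsun, not_forall, not_not] at h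
  obtain ⟨k, i, j, l, hij, hjl, hik, hjk, hlk, hlj, hji, hleft, hright⟩ := h
  simp only [gamma_apply, Fin.val_rev, Fin.rev_lt_rev] at hik hjk hlk hlj hji hleft hright
  have hsmall : ∀ m : Fin n, k ≤ n - ((σ⁻¹ m.rev).val + 1) → (σ⁻¹ m.rev).val < n - k :=
    fun m hm => by have := (σ⁻¹ m.rev).isLt; omega
  refine ⟨n - k, l.rev, j.rev, i.rev, Fin.rev_lt_rev.mpr hjl, Fin.rev_lt_rev.mpr hij,
    by have := (σ⁻¹ i.rev).isLt; omega, hji, hlj, fun m hlm hmj => ?_, fun m hjm hmi => ?_⟩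
  · simpa using hsmall m.rev (hright m.rev (Fin.lt_rev_iff.mp hmj) (Fin.rev_lt_iff.mp hlm))
  · simpa using hsmall m.rev (hleft m.rev (Fin.lt_rev_iff.mp hmi) (Fin.rev_lt_iff.mp hjm))

namespace IsTopDoubleDescent

variable {τ : Perm (Fin n)} {K : ℕ} {i j l : Fin n}

theorem lt_inv_apply (h : IsTopDoubleDescent τ K i j l) {w : Fin n} (hlw : τ l < w)
    (hwj : w ≠ τ j) (hiw : i < τ⁻¹ w) : l < τ⁻¹ w := by
  have hK : K ≤ (τ (τ⁻¹ w)).val := by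
    rw [show τ (τ⁻¹ w) = w by simp]; exact h.le_last.trans hlw.le
  rcases lt_trichotomy (τ⁻¹ w) j with hwj' | rfl | hjw
  · exact absurd (h.small_left _ hiw hwj') (not_lt.mpr hK)
  · simp at hwj
  · rcases lt_trichotomy (τ⁻¹ w) l with hwl | hwl | hlw'
    · exact absurd (h.small_right _ hjw hwl) (not_lt.mpr hK)
    · simp [← hwl] at hlw
    · exact hlw'

theorem succ_lt_mid (h : IsTopDoubleDescent τ K i j l) (hτ : Simsun τ) : i.val + 1 < j.val := by
  by_contra! hij
  have hj : j.val + 1 < n := by have := h.mid_lt; omega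
  set t : Fin n := ⟨j.val + 1, hj⟩
  have hjt : j < t := Fin.lt_def.mpr (Nat.lt_succ_self _)
  have htj : τ t < τ j := by
    rcases (show t ≤ l from h.mid_lt).lt_or_eq with htl | rfl
    · exact Fin.lt_def.mpr (lt_of_lt_of_le (h.small_right t hjt htl)
        (h.le_last.trans h.last_lt_mid.le))
    · exact h.last_lt_mid
  refine hτ n ⟨i, j, t, h.lt_mid, hjt, (τ i).isLt, (τ j).isLt, (τ t).isLt, htj, h.mid_lt_first,
    fun m him hmj => ?_, fun m hjm hmt => ?_⟩
  · have := Fin.lt_def.mp him; have := Fin.lt_def.mp hmj; omega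
  · have : j.val < m.val := hjm; have : m.val < j.val + 1 := hmt; omega

theorem exists_before_between (h : IsTopDoubleDescent τ K i j l) (hτ : Simsun τ⁻¹) :
    ∃ q < i, τ l < τ q ∧ τ q < τ j := by
  by_contra! hq
  obtain ⟨e, ⟨hje, hei⟩, hemin⟩ := (wellFounded_lt (α := Fin n)).has_min
    {v | τ j < v ∧ τ⁻¹ v ≤ i} ⟨τ i, h.mid_lt_first, by simp⟩
  refine hτ (l.val + 1) ⟨τ l, τ j, e, h.last_lt_mid, hje, by simp, ?_, ?_, ?_, ?_,
    fun m hlm hmj => ?_, fun m hjm hme => ?_⟩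
  · simpa using Nat.lt_succ_of_lt h.mid_lt
  · exact Nat.lt_succ_of_lt (lt_of_le_of_lt hei (h.lt_mid.trans h.mid_lt))
  · simpa using lt_of_le_of_lt hei h.lt_mid
  · simpa using h.mid_lt
  · refine h.lt_inv_apply hlm hmj.ne (lt_of_not_ge fun hmi => ?_)
    rcases hmi.lt_or_eq with hmi | hmi
    · exact absurd (hq _ hmi (by simpa using hlm)) (by simpa using hmj)
    · exact absurd (h.mid_lt_first.trans_eq (by simp [← hmi])) hmj.asymm
  · exact h.lt_inv_apply (h.last_lt_mid.trans hjm) hjm.ne'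
      (lt_of_not_ge fun hmi => hemin m ⟨hjm, hmi⟩ hme)

theorem contains35142 (h : IsTopDoubleDescent τ K i j l) (hτ : DoubleSimsun τ) :
    Contains35142 τ := by
  obtain ⟨q, hqi, hlq, hqj⟩ := h.exists_before_between hτ.2
  have hp := h.succ_lt_mid hτ.1
  set p : Fin n := ⟨i.val + 1, hp.trans j.isLt⟩
  have hpK := h.small_left p (Fin.lt_def.mpr (Nat.lt_succ_self _)) (Fin.lt_def.mpr hp)
  exact ⟨q, i, p, j, l, hqi, Fin.lt_def.mpr (Nat.lt_succ_self _), Fin.lt_def.mpr hp, h.mid_lt,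
    Fin.lt_def.mpr (lt_of_lt_of_le hpK h.le_last), hlq, hqj, h.mid_lt_first⟩

end IsTopDoubleDescent

theorem Contains35142.inv {τ : Perm (Fin n)} (h : Contains35142 τ) : Contains35142 τ⁻¹ := by
  obtain ⟨i1, i2, i3, i4, i5, h12, h23, h34, h45, v35, v51, v14, v42⟩ := h
  exact ⟨τ i3, τ i5, τ i1, τ i4, τ i2, v35, v51, v14, v42, by simpa, by simpa, by simpa, by simpa⟩

theorem Contains35142.contains42513_gamma_inv {σ : Perm (Fin n)} (h : Contains35142 σ) :
    Contains42513 (Gamma σ⁻¹) := by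
  obtain ⟨i1, i2, i3, i4, i5, h12, h23, h34, h45, v35, v51, v14, v42⟩ := h
  exact ⟨i5.rev, i4.rev, i3.rev, i2.rev, i1.rev, Fin.rev_lt_rev.mpr h45, Fin.rev_lt_rev.mpr h34,
    Fin.rev_lt_rev.mpr h23, Fin.rev_lt_rev.mpr h12, by simpa [gamma_apply], by simpa [gamma_apply],
    by simpa [gamma_apply], by simpa [gamma_apply]⟩

theorem DoubleSimsun.contains35142_inv_of_not_simsun_gamma {σ : Perm (Fin n)}
    (hσ : DoubleSimsun σ) (h : ¬ Simsun (Gamma σ)) : Contains35142 σ⁻¹ := by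
  obtain ⟨K, i, j, l, hdd⟩ := exists_isTopDoubleDescent_inv_of_not_simsun_gamma h
  exact hdd.contains35142 hσ.inv

end

/-- If `σ` is double simsun and `Γ(σ)` is not double simsun, then `σ`
contains a 35142-pattern (equivalently, `Γ(σ)` contains a 42513-pattern). -/
theorem contains35142_of_gamma_not_doubleSimsun {n : ℕ} (σ : Equiv.Perm (Fin n))
    (hσ : DoubleSimsun σ) (h : ¬ DoubleSimsun (Gamma σ)) :
    Contains35142 σ ∧ Contains42513 (Gamma σ) := by
  have hσ35142 : Contains35142 σ := by
    rcases not_and_or.mp h with hΓ | hΓinv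
    · simpa using (hσ.contains35142_inv_of_not_simsun_gamma hΓ).inv
    · rw [gamma_inv] at hΓinv
      simpa using hσ.inv.contains35142_inv_of_not_simsun_gamma hΓinv
  exact ⟨hσ35142, by simpa using hσ35142.inv.contains42513_gamma_inv⟩
end

section
/- Every 312-avoiding simsun permutation is double simsun; that is, the set of 312-avoiding simsun permutations in S_n equals the set of 312-avoiding double simsun permutations in S_n. -/
/-!
Let `σ` avoid 312 and be simsun, and suppose `σ⁻¹` has a double descent on the values below `k`,
at positions `i < j < l`. In `σ` this is a 321 occurrence: values `l > j > i` at positions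
`a < b < c`, all below `k`. By 312-avoidance every entry of `σ` strictly between positions `a` and
`c` exceeds `i`; the gap condition for `σ⁻¹` says that the values in `(i, l)` other than `j` sit at
positions `≥ k > c`, so those entries even exceed `l`. Hence `l, j, i` is a double descent of `σ`
restricted to the values `≤ l`, contradicting that `σ` is simsun.
-/

theorem Avoids312.apply_lt_apply_of_lt_of_lt {n : ℕ} {σ : Equiv.Perm (Fin n)} (h : Avoids312 σ)
    {a m c : Fin n} (ham : a < m) (hmc : m < c) (hca : σ c < σ a) : σ c < σ m := by
  refine lt_of_le_of_ne (not_lt.mp fun hmc' => h ⟨a, m, c, ham, hmc, hmc', hca⟩) ?_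
  exact fun h => hmc.ne (σ.injective h).symm

theorem Simsun.inv_of_avoids312 {n : ℕ} {σ : Equiv.Perm (Fin n)} (hs : Simsun σ)
    (h312 : Avoids312 σ) : Simsun σ⁻¹ := by
  rintro k ⟨i, j, l, hij, hjl, hi, -, -, hlj, hji, gap_ij, gap_jl⟩
  obtain ⟨a, rfl⟩ := σ.surjective l
  obtain ⟨b, rfl⟩ := σ.surjective j
  obtain ⟨c, rfl⟩ := σ.surjective i
  simp only [Equiv.Perm.inv_def, Equiv.symm_apply_apply] at *
  have gap : ∀ m, a < m → m < c → m ≠ b → σ a < σ m := by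
    intro m ham hmc hmb
    have hcm : σ c < σ m := h312.apply_lt_apply_of_lt_of_lt ham hmc (hij.trans hjl)
    have hbm : σ m ≠ σ b := fun h => hmb (σ.injective h)
    by_contra! hma_le
    have hma : σ m < σ a := lt_of_le_of_ne hma_le fun h => ham.ne' (σ.injective h)
    have hkm : k ≤ m.val := by
      rcases hbm.lt_or_gt with hmb' | hbm'
      · simpa using gap_ij (σ m) hcm hmb'
      · simpa using gap_jl (σ m) hbm' hma
    have : m.val < c.val := hmc
    omega
  refine hs ((σ a).val + 1) ⟨a, b, c, hlj, hji, by omega, by omega, by omega, hij, hjl, ?_, ?_⟩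
  · exact fun m ham hmb => gap m ham (hmb.trans hji) hmb.ne
  · exact fun m hbm hmc => gap m (hlj.trans hbm) hmc hbm.ne'

/-- Every 312-avoiding simsun permutation is double simsun: the set of
312-avoiding simsun permutations equals the set of 312-avoiding double simsun
permutations. -/
theorem avoid312_simsun_eq_doubleSimsun (n : ℕ) :
    {σ : Equiv.Perm (Fin n) | Avoids312 σ ∧ Simsun σ} =
      {σ : Equiv.Perm (Fin n) | Avoids312 σ ∧ DoubleSimsun σ} := by
  ext σ
  exact ⟨fun ⟨h312, hs⟩ => ⟨h312, hs, hs.inv_of_avoids312 h312⟩, fun ⟨h312, hd⟩ => ⟨h312, hd.1⟩⟩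
end

section
/- The number of 312-avoiding simsun permutations in S_n is 2^{n-1}, and the same holds for 231-avoiding double simsun permutations in S_n. -/
/-!
A 312-avoiding permutation is simsun exactly when every entry has at most one smaller entry to its
right: the smaller entries to the right of `σ i` decrease, so if there are two, the first two form
a double descent with `σ i` in the subword of values `≤ σ i`. Counting positions against values,
this local condition says `σ x ≤ x + 1` for all `x`; such permutations are obtained by choosing
`σ 0 ∈ {0, 1}` and recursing, hence there are `2^(n-1)` of them. Inversion maps the 231-avoiding
double simsun permutations onto the 312-avoiding simsun ones, because both classes are
321-avoiding, 321-avoidance is preserved by inversion, and it implies simsun.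
-/

open Equiv Finset

section SmallerAfter

variable {n : ℕ}

/-- Its cardinality is the `i`-th entry of the Lehmer code of `σ`. -/
def smallerAfter (σ : Perm (Fin n)) (i : Fin n) : Finset (Fin n) :=
  univ.filter fun p => i < p ∧ σ p < σ i

@[simp]
theorem mem_smallerAfter {σ : Perm (Fin n)} {i p : Fin n} :
    p ∈ smallerAfter σ i ↔ i < p ∧ σ p < σ i := by
  simp [smallerAfter]

def BoundedBySucc (σ : Perm (Fin n)) : Prop :=
  ∀ x : Fin n, (σ x).val ≤ x.val + 1

theorem boundedBySucc_iff_card_smallerAfter_le_one (σ : Perm (Fin n)) :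
    BoundedBySucc σ ↔ ∀ i, #(smallerAfter σ i) ≤ 1 := by
  constructor
  · -- the positions `≤ i` and those of `smallerAfter σ i` all carry values `≤ i + 1`
    intro hσ i
    have hdisj : Disjoint (Iic i) (smallerAfter σ i) :=
      disjoint_left.2 fun p hp hp' => (mem_Iic.1 hp).not_gt (mem_smallerAfter.1 hp').1
    have hmaps : ∀ p ∈ Iic i ∪ smallerAfter σ i, (σ p).val ∈ range (i.val + 2) := by
      intro p hp
      rw [mem_range]
      rcases mem_union.1 hp with hp | hp
      · have := hσ p; have := Fin.le_def.1 (mem_Iic.1 hp); omega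
      · have := hσ i; have := Fin.lt_def.1 (mem_smallerAfter.1 hp).2; omega
    have hcard := card_le_card_of_injOn _ hmaps
      (Fin.val_injective.comp σ.injective).injOn
    rw [card_union_of_disjoint hdisj, Fin.card_Iic, card_range] at hcard
    omega
  · -- the values `< σ i` sit at positions `< i` or in `smallerAfter σ i`
    intro h i
    have hmaps : ∀ v ∈ Iio (σ i), σ.symm v ∈ Iio i ∪ smallerAfter σ i := by
      intro v hv
      have hv : σ (σ.symm v) < σ i := by simpa using mem_Iio.1 hv
      rcases lt_trichotomy (σ.symm v) i with hlt | heq | hgt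
      · exact mem_union_left _ (mem_Iio.2 hlt)
      · exact absurd hv (by rw [heq]; exact lt_irrefl _)
      · exact mem_union_right _ (mem_smallerAfter.2 ⟨hgt, hv⟩)
    have hcard := (card_le_card_of_injOn _ hmaps σ.symm.injective.injOn).trans
      (card_union_le _ _)
    rw [Fin.card_Iio, Fin.card_Iio] at hcard
    have := h i
    omega

theorem one_lt_card_smallerAfter {σ : Perm (Fin n)} {i j k : Fin n}
    (hij : i < j) (hjk : j < k) (hj : σ j < σ i) (hk : σ k < σ i) :
    1 < #(smallerAfter σ i) :=
  one_lt_card.2 ⟨j, mem_smallerAfter.2 ⟨hij, hj⟩, k, mem_smallerAfter.2 ⟨hij.trans hjk, hk⟩,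
    hjk.ne⟩

variable {σ : Perm (Fin n)}

theorem avoids312_of_card_smallerAfter_le_one (h : ∀ i, #(smallerAfter σ i) ≤ 1) :
    Avoids312 σ := by
  rintro ⟨i, j, k, hij, hjk, hjk', hki⟩
  exact (h i).not_gt (one_lt_card_smallerAfter hij hjk (hjk'.trans hki) hki)

theorem avoids321_of_card_smallerAfter_le_one (h : ∀ i, #(smallerAfter σ i) ≤ 1) :
    Avoids321 σ := by
  rintro ⟨i, j, k, hij, hjk, hkj, hji⟩
  exact (h i).not_gt (one_lt_card_smallerAfter hij hjk hji (hkj.trans hji))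

theorem card_smallerAfter_le_one_of_simsun (h312 : Avoids312 σ) (hs : Simsun σ) (i : Fin n) :
    #(smallerAfter σ i) ≤ 1 := by
  by_contra! htwo
  set S := smallerAfter σ i
  have hS : S.Nonempty := card_pos.1 (by omega)
  have hS' : (S.erase (S.min' hS)).Nonempty := by
    rw [← card_pos, card_erase_of_mem (S.min'_mem hS)]
    omega
  set j := S.min' hS
  set l := (S.erase j).min' hS'
  have hj : i < j ∧ σ j < σ i := mem_smallerAfter.1 (S.min'_mem hS)
  have hl' : l ∈ S.erase j := (S.erase j).min'_mem hS'
  have hl : i < l ∧ σ l < σ i := mem_smallerAfter.1 (mem_of_mem_erase hl')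
  have hjl : j < l := (S.min'_le l (mem_of_mem_erase hl')).lt_of_ne (ne_of_mem_erase hl').symm
  have hlj : σ l < σ j := by
    refine (lt_or_gt_of_ne (σ.injective.ne hjl.ne')).resolve_right fun hjl' => ?_
    exact h312 ⟨i, j, l, hj.1, hjl, hjl', hl.2⟩
  have above : ∀ m, i < m → m ∉ S → (σ i).val + 1 ≤ (σ m).val := by
    intro m him hmS
    exact (lt_or_gt_of_ne (σ.injective.ne him.ne')).resolve_left
      fun hmi => hmS (mem_smallerAfter.2 ⟨him, hmi⟩)
  refine hs ((σ i).val + 1) ⟨i, j, l, hj.1, hjl, by omega, ?_, ?_, hlj, hj.2, ?_, ?_⟩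
  · have := Fin.lt_def.1 hj.2; omega
  · have := Fin.lt_def.1 hl.2; omega
  · exact fun m him hmj => above m him fun hm => (S.min'_le m hm).not_gt hmj
  · exact fun m hjm hml => above m (hj.1.trans hjm) fun hm =>
      ((S.erase j).min'_le m (mem_erase.2 ⟨hjm.ne', hm⟩)).not_gt hml

theorem Avoids321.simsun (h : Avoids321 σ) : Simsun σ := by
  rintro k ⟨i, j, l, hij, hjl, -, -, -, hlj, hji, -, -⟩
  exact h ⟨i, j, l, hij, hjl, hlj, hji⟩

theorem Avoids321.inv (h : Avoids321 σ) : Avoids321 σ⁻¹ := by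
  rintro ⟨a, b, c, hab, hbc, hcb, hba⟩
  exact h ⟨σ⁻¹ c, σ⁻¹ b, σ⁻¹ a, hcb, hba, by simpa using hab, by simpa using hbc⟩

theorem avoids231_iff_avoids312_inv : Avoids231 σ ↔ Avoids312 σ⁻¹ := by
  constructor
  · rintro h ⟨a, b, c, hab, hbc, h1, h2⟩
    exact h ⟨σ⁻¹ b, σ⁻¹ c, σ⁻¹ a, h1, h2, by simpa using hab, by simpa using hbc⟩
  · rintro h ⟨i, j, k, hij, hjk, h1, h2⟩
    exact h ⟨σ k, σ i, σ j, h1, h2, by simpa using hij, by simpa using hjk⟩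

theorem avoids312_and_simsun_iff_card_smallerAfter_le_one :
    Avoids312 σ ∧ Simsun σ ↔ ∀ i, #(smallerAfter σ i) ≤ 1 :=
  ⟨fun h => card_smallerAfter_le_one_of_simsun h.1 h.2, fun h =>
    ⟨avoids312_of_card_smallerAfter_le_one h, (avoids321_of_card_smallerAfter_le_one h).simsun⟩⟩

theorem avoids231_and_doubleSimsun_iff :
    Avoids231 σ ∧ DoubleSimsun σ ↔ Avoids312 σ⁻¹ ∧ Simsun σ⁻¹ := by
  rw [avoids231_iff_avoids312_inv]
  refine ⟨fun h => ⟨h.1, h.2.2⟩, fun h => ⟨h.1, ?_, h.2⟩⟩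
  have h321 := avoids321_of_card_smallerAfter_le_one
    (avoids312_and_simsun_iff_card_smallerAfter_le_one.1 h)
  simpa using h321.inv.simsun

end SmallerAfter

theorem boundedBySucc_decomposeFin_symm_iff {n : ℕ} (p : Fin (n + 1)) (e : Perm (Fin n)) :
    BoundedBySucc (Perm.decomposeFin.symm (p, e)) ↔ p.val ≤ 1 ∧ BoundedBySucc e := by
  constructor
  · intro h
    have hp : p.val ≤ 1 := by simpa using h 0
    refine ⟨hp, fun i => ?_⟩
    have hi := h i.succ
    rw [Perm.decomposeFin_symm_apply_succ] at hi
    by_cases hip : (e i).succ = p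
    · have : (e i).val + 1 = p.val := congrArg Fin.val hip
      omega
    · rw [swap_apply_of_ne_of_ne (Fin.succ_ne_zero _) hip] at hi
      simpa using hi
  · rintro ⟨hp, he⟩ x
    induction x using Fin.cases with
    | zero => simpa using hp
    | succ i =>
      rw [Perm.decomposeFin_symm_apply_succ]
      by_cases hi : (e i).succ = p
      · rw [hi, swap_apply_right]
        simp
      · rw [swap_apply_of_ne_of_ne (Fin.succ_ne_zero _) hi]
        simpa using he i

theorem card_boundedBySucc : ∀ n : ℕ, Nat.card {σ : Perm (Fin n) // BoundedBySucc σ} = 2 ^ (n - 1)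
  | 0 | 1 => Nat.card_eq_one_iff_unique.2 ⟨inferInstance, ⟨⟨1, fun x => by simp⟩⟩⟩
  | n + 2 => by
    -- `decomposeFin` splits off the value `σ 0`, which must be `0` or `1`
    have e : {σ : Perm (Fin (n + 2)) // BoundedBySucc σ} ≃
        {p : Fin (n + 2) // p.val ≤ 1} × {e : Perm (Fin (n + 1)) // BoundedBySucc e} :=
      ((Perm.decomposeFin.symm.subtypeEquiv fun q =>
        (boundedBySucc_decomposeFin_symm_iff q.1 q.2).symm).symm.trans
        (subtypeProdEquivProd (p := fun p : Fin (n + 2) => p.val ≤ 1) (q := BoundedBySucc)))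
    rw [Nat.card_congr e, Nat.card_prod, card_boundedBySucc (n + 1)]
    have hfirst : univ.filter (fun p : Fin (n + 2) => p.val ≤ 1) = {0, 1} := by
      ext x
      simp only [mem_filter, mem_univ, true_and, mem_insert, mem_singleton, Fin.ext_iff,
        Fin.val_zero, Fin.val_one]
      omega
    rw [Nat.card_eq_fintype_card, Fintype.card_subtype, hfirst, card_pair Fin.zero_ne_one]
    exact (pow_succ' 2 n).symm

theorem card_avoid312_simsun_eq_two_pow_general (n : ℕ) :
    Nat.card {σ : Equiv.Perm (Fin n) // Avoids312 σ ∧ Simsun σ} = 2 ^ (n - 1) ∧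
    Nat.card {σ : Equiv.Perm (Fin n) // Avoids231 σ ∧ DoubleSimsun σ} = 2 ^ (n - 1) := by
  have h312 : Nat.card {σ : Perm (Fin n) // Avoids312 σ ∧ Simsun σ} = 2 ^ (n - 1) := by
    rw [← card_boundedBySucc n]
    exact Nat.card_congr <| subtypeEquivRight fun σ =>
      avoids312_and_simsun_iff_card_smallerAfter_le_one.trans
        (boundedBySucc_iff_card_smallerAfter_le_one σ).symm
  refine ⟨h312, h312 ▸ Nat.card_congr ?_⟩
  exact (Equiv.inv _).subtypeEquiv fun σ => avoids231_and_doubleSimsun_iff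

/-- The number of 312-avoiding simsun permutations in `S_n` is `2^{n-1}`, and
so is the number of 231-avoiding double simsun permutations. -/
theorem card_avoid312_simsun_eq_two_pow (n : ℕ) (hn : 1 ≤ n) :
    Nat.card {σ : Equiv.Perm (Fin n) // Avoids312 σ ∧ Simsun σ} = 2 ^ (n - 1) ∧
    Nat.card {σ : Equiv.Perm (Fin n) // Avoids231 σ ∧ DoubleSimsun σ} = 2 ^ (n - 1) :=
  card_avoid312_simsun_eq_two_pow_general n
end
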